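/- arXiv:math/0302313 — 3 statements merged into one kernel-verified Lean document; each statement's English description precedes it below -/
import Mathlib

section
/- A simplicial complex Δ on [n] is CLeray (i.e., H̃_p(Δ_R) = 0 for all p ≥ c and all R ⊆ [n]) if and only if its Alexander dual Δ* is Cohen-Macaulay (i.e., H̃_p(lk_{Δ*} S) = 0 for all faces S of Δ* whenever p + |S| ≤ d* - 2, where d*-1 = dim Δ*). -/
/-
For `R ⊆ [n]`, complementation `G ↦ R \ G` is a bijection between the faces of `lk_{Δ*}(Rᶜ)` and
the non-faces of `Δ` inside `R`, i.e. the faces of the relative complex `(2^R, Δ_R)`. Up to a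
diagonal change of signs it transposes the boundary matrices, so the boundary maps of the two
complexes have the same ranks and `H̃_q(lk_{Δ*} Rᶜ) = 0 ↔ H̃_{|R|-q-2}(2^R, Δ_R) = 0`. The simplex
`2^R` is a cone, so the long exact sequence of the pair gives `H̃_j(2^R, Δ_R) ≅ H̃_{j-1}(Δ_R)`.
Finally `c + d* + 1 = n`, so `|R| - q - 3 ≥ c` exactly when `q + |Rᶜ| ≤ d* - 2`; the remaining
case `R ∈ Δ` is trivial because `Δ_R` is then a simplex.
-/

open Finset

namespace SCx

variable (k : Type) [Field k] {n : ℕ}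

/-- An (abstract) simplicial complex on the vertex set `Fin n`:
a set of finsets closed under taking subsets. -/
def IsComplex (Δ : Set (Finset (Fin n))) : Prop :=
  ∀ F ∈ Δ, ∀ G ⊆ F, G ∈ Δ

/-- Simplicial `p`-chains with coefficients in `k`: functions on the faces of
cardinality `p+1`. -/
abbrev Chains (Δ : Set (Finset (Fin n))) (p : ℤ) : Type :=
  {F : Finset (Fin n) // F ∈ Δ ∧ (F.card : ℤ) = p + 1} → k

open Classical in
/-- The underlying function of the simplicial boundary map, written via its
transpose formula:
`(∂ f) G = ∑_{x : insert x G ∈ Δ} (-1)^{pos of x in insert x G} f (insert x G)`. -/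
noncomputable def boundaryFun (Δ : Set (Finset (Fin n))) (p : ℤ)
    (f : Chains k Δ p) : Chains k Δ (p - 1) := fun G => ∑ x : Fin n,
  if h : x ∉ G.1 ∧ insert x G.1 ∈ Δ then
    (-1 : k) ^ (G.1.filter (fun y => y < x)).card *
      f ⟨insert x G.1, h.2, by
        have hc := G.2.2
        rw [Finset.card_insert_of_notMem h.1]
        push_cast at hc ⊢
        omega⟩
  else 0

/-- The simplicial boundary map. -/
noncomputable def boundary (Δ : Set (Finset (Fin n))) (p : ℤ) :
    Chains k Δ p →ₗ[k] Chains k Δ (p - 1) where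
  toFun := boundaryFun k Δ p
  map_add' f g := by
    funext G
    unfold boundaryFun
    rw [Pi.add_apply]
    rw [← Finset.sum_add_distrib]
    refine Finset.sum_congr rfl fun x _ => ?_
    split_ifs with h
    · rw [Pi.add_apply]; ring
    · rw [add_zero]
  map_smul' c f := by
    funext G
    unfold boundaryFun
    simp only [RingHom.id_apply, Pi.smul_apply, smul_eq_mul, Finset.mul_sum]
    refine Finset.sum_congr rfl fun x _ => ?_
    split_ifs with h
    · ring
    · rw [mul_zero]

/-- Transport of chains along an equality of degrees. -/
noncomputable def chainsCongr (Δ : Set (Finset (Fin n))) {p q : ℤ} (h : p = q) :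
    Chains k Δ p ≃ₗ[k] Chains k Δ q := by
  subst h; exact LinearEquiv.refl k _

noncomputable def cycles (Δ : Set (Finset (Fin n))) (p : ℤ) : Submodule k (Chains k Δ p) :=
  LinearMap.ker (boundary k Δ p)

noncomputable def boundaries (Δ : Set (Finset (Fin n))) (p : ℤ) : Submodule k (Chains k Δ p) :=
  LinearMap.range ((chainsCongr k Δ (show p + 1 - 1 = p by ring)).toLinearMap ∘ₗ
    boundary k Δ (p + 1))

/-- Reduced simplicial homology of `Δ` in degree `p`, with coefficients in the field `k`,
defined as cycles modulo (boundaries intersected with cycles).  With this convention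
`H̃_{-1}({∅}) = k`. -/
abbrev ReducedHomology (Δ : Set (Finset (Fin n))) (p : ℤ) :=
  ↥(cycles k Δ p) ⧸ (Submodule.comap (cycles k Δ p).subtype (boundaries k Δ p))

/-- The Alexander dual of `Δ`. -/
def dual (Δ : Set (Finset (Fin n))) : Set (Finset (Fin n)) := {F | Fᶜ ∉ Δ}

/-- The restriction `Δ_R` of `Δ` to a vertex subset `R`. -/
def restrict (Δ : Set (Finset (Fin n))) (R : Finset (Fin n)) : Set (Finset (Fin n)) :=
  {F | F ∈ Δ ∧ F ⊆ R}

/-- The link `lk_Δ S`. -/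
def link (Δ : Set (Finset (Fin n))) (S : Finset (Fin n)) : Set (Finset (Fin n)) :=
  {F | Disjoint F S ∧ F ∪ S ∈ Δ}

/-- `Δ_R^{S,T} = {F ⊆ R : F ∪ S ∈ Δ}` (for `T` the complement of `R ∪ S`). -/
def sub (Δ : Set (Finset (Fin n))) (R S : Finset (Fin n)) : Set (Finset (Fin n)) :=
  {F | F ⊆ R ∧ F ∪ S ∈ Δ}

/-- `Δ` has dimension `d - 1`, i.e. `d` is the maximal cardinality of a face. -/
def IsDim (Δ : Set (Finset (Fin n))) (d : ℕ) : Prop :=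
  (∀ F ∈ Δ, F.card ≤ d) ∧ ∃ F ∈ Δ, F.card = d

/-- `Δ` has frame dimension `c - 1`, i.e. `c` is the largest integer such that
every `c`-subset of `[n]` is a face of `Δ`. -/
def IsFrame (Δ : Set (Finset (Fin n))) (c : ℕ) : Prop :=
  (∀ F : Finset (Fin n), F.card ≤ c → F ∈ Δ) ∧
    ∃ F : Finset (Fin n), F.card = c + 1 ∧ F ∉ Δ

/-- A facet: a maximal face. -/
def IsFacet (Δ : Set (Finset (Fin n))) (F : Finset (Fin n)) : Prop :=
  F ∈ Δ ∧ ∀ G ∈ Δ, F ⊆ G → F = G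

-- Chains of every family `Δ'` are extended by zero to functions on all subsets of `Fin n`; there
-- the boundary of `Δ'` becomes `proj Δ' ∘ fullBoundary` (`extendByZero_boundary`).
abbrev FullChains (k : Type) (n : ℕ) : Type := Finset (Fin n) → k

def signBelow (G : Finset (Fin n)) (x : Fin n) : k := (-1) ^ #(G.filter (· < x))

section Signs

variable {k}

theorem signBelow_mul_self (G : Finset (Fin n)) (x : Fin n) :
    signBelow k G x * signBelow k G x = 1 := by
  rw [signBelow, ← pow_add, ← two_mul, pow_mul, neg_one_sq, one_pow]

theorem signBelow_insert {G : Finset (Fin n)} {y : Fin n} (hy : y ∉ G) (x : Fin n) :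
    signBelow k (insert y G) x = (if y < x then -1 else 1) * signBelow k G x := by
  unfold signBelow
  rw [filter_insert]
  split_ifs with h
  · rw [card_insert_of_notMem fun hmem => hy (mem_of_mem_filter _ hmem), pow_succ, mul_comm]
  · rw [one_mul]

theorem signBelow_insert_self (G : Finset (Fin n)) (x : Fin n) :
    signBelow k (insert x G) x = signBelow k G x := by
  unfold signBelow
  rw [filter_insert, if_neg (lt_irrefl x)]

theorem signBelow_insert_comm {G : Finset (Fin n)} {x y : Fin n} (hxy : x ≠ y) (hx : x ∉ G)
    (hy : y ∉ G) :
    signBelow k G y * signBelow k (insert y G) x =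
      -(signBelow k G x * signBelow k (insert x G) y) := by
  rw [signBelow_insert hx, signBelow_insert hy]
  rcases hxy.lt_or_gt with h | h
  · rw [if_pos h, if_neg h.asymm]; ring
  · rw [if_neg h.asymm, if_pos h]; ring

theorem signBelow_sdiff_mul {A R : Finset (Fin n)} (h : A ⊆ R) (x : Fin n) :
    signBelow k A x * signBelow k (R \ A) x = signBelow k R x := by
  unfold signBelow
  rw [← pow_add, ← card_union_of_disjoint (disjoint_filter_filter disjoint_sdiff),
    ← filter_union, union_sdiff_of_subset h]

end Signs

noncomputable def fullBoundary : FullChains k n →ₗ[k] FullChains k n where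
  toFun f G := ∑ x ∈ Gᶜ, signBelow k G x * f (insert x G)
  map_add' f g := by
    ext G
    simp only [Pi.add_apply, mul_add, sum_add_distrib]
  map_smul' c f := by
    ext G
    simp only [Pi.smul_apply, smul_eq_mul, RingHom.id_apply, mul_sum]
    exact sum_congr rfl fun x _ => mul_left_comm _ _ _

section FullBoundary

variable {k}

theorem fullBoundary_apply (f : FullChains k n) (G : Finset (Fin n)) :
    fullBoundary k f G = ∑ x ∈ Gᶜ, signBelow k G x * f (insert x G) := rfl

theorem fullBoundary_fullBoundary (f : FullChains k n) :
    fullBoundary k (fullBoundary k f) = 0 := by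
  ext G
  let t : Fin n × Fin n → k := fun yx =>
    if yx.1 ∈ Gᶜ ∧ yx.2 ∈ (insert yx.1 G)ᶜ then
      signBelow k G yx.1 * signBelow k (insert yx.1 G) yx.2 * f (insert yx.2 (insert yx.1 G))
    else 0
  have hsum : fullBoundary k (fullBoundary k f) G = ∑ yx, t yx := by
    simp only [t, ← univ_product_univ, sum_product, fullBoundary_apply, ite_and, sum_ite_irrel,
      sum_ite_mem, univ_inter, mul_sum, mul_assoc, sum_const_zero]
  have hmem : ∀ y x : Fin n, (y ∈ Gᶜ ∧ x ∈ (insert y G)ᶜ) ↔ (x ≠ y ∧ x ∉ G ∧ y ∉ G) := by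
    intro y x
    simp only [mem_compl, mem_insert, not_or]
    tauto
  rw [hsum, Pi.zero_apply]
  refine sum_ninvolution Prod.swap (fun ⟨y, x⟩ => ?_) (fun ⟨y, x⟩ hne heq => ?_)
    (fun _ => mem_univ _) Prod.swap_swap
  · simp only [t, Prod.swap_prod_mk, hmem]
    by_cases h : x ≠ y ∧ x ∉ G ∧ y ∉ G
    · obtain ⟨hxy, hx, hy⟩ := h
      rw [if_pos ⟨hxy, hx, hy⟩, if_pos ⟨hxy.symm, hy, hx⟩, insert_comm,
        signBelow_insert_comm hxy hx hy]
      ring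
    · rw [if_neg h, if_neg fun ⟨hxy, hy, hx⟩ => h ⟨hxy.symm, hx, hy⟩, add_zero]
  · rw [Prod.swap_prod_mk, Prod.mk.injEq] at heq
    exact hne (if_neg fun h => ((hmem y x).1 h).1 heq.1)

end FullBoundary

noncomputable def cone (v : Fin n) : FullChains k n →ₗ[k] FullChains k n where
  toFun f F := if v ∈ F then signBelow k F v * f (F.erase v) else 0
  map_add' f g := by
    ext F
    simp only [Pi.add_apply]
    split_ifs <;> ring
  map_smul' c f := by
    ext F
    simp only [Pi.smul_apply, smul_eq_mul, RingHom.id_apply]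
    split_ifs <;> ring

section Cone

variable {k}

theorem cone_apply (v : Fin n) (f : FullChains k n) (F : Finset (Fin n)) :
    cone k v f F = if v ∈ F then signBelow k F v * f (F.erase v) else 0 := rfl

theorem signBelow_insert_mul_signBelow_insert {G : Finset (Fin n)} {x v : Fin n} (hxv : x ≠ v)
    (hx : x ∉ G) (hv : v ∉ G) :
    signBelow k (insert v G) x * signBelow k (insert x (insert v G)) v =
      -(signBelow k (insert v G) v * signBelow k G x) := by
  have hx' : x ∉ insert v G := by simp [hxv, hx]
  rw [signBelow_insert hv, signBelow_insert hx', signBelow_insert_self]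
  rcases hxv.lt_or_gt with h | h
  · rw [if_pos h, if_neg h.asymm]; ring
  · rw [if_neg h.asymm, if_pos h]; ring

theorem fullBoundary_cone_apply_of_notMem {v : Fin n} {G : Finset (Fin n)} (hv : v ∉ G)
    (f : FullChains k n) : fullBoundary k (cone k v f) G = f G := by
  rw [fullBoundary_apply, sum_eq_single_of_mem v (mem_compl.2 hv)]
  · rw [cone_apply, if_pos (mem_insert_self v G), erase_insert hv, signBelow_insert_self,
      ← mul_assoc, signBelow_mul_self, one_mul]
  · intro x _ hxv
    rw [cone_apply, if_neg (by simp [hv, Ne.symm hxv]), mul_zero]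

theorem fullBoundary_cone_add_cone_fullBoundary_apply_insert {v : Fin n} {G : Finset (Fin n)}
    (hv : v ∉ G) (f : FullChains k n) :
    fullBoundary k (cone k v f) (insert v G) + cone k v (fullBoundary k f) (insert v G) =
      f (insert v G) := by
  have hGc : Gᶜ = insert v (insert v G)ᶜ := by rw [compl_insert, insert_erase (mem_compl.2 hv)]
  have hcancel : ∀ x ∈ (insert v G)ᶜ,
      signBelow k (insert v G) x * cone k v f (insert x (insert v G)) =
        -(signBelow k (insert v G) v * (signBelow k G x * f (insert x G))) := by
    intro x hx
    have hxv : x ≠ v := fun h => mem_compl.1 hx (h ▸ mem_insert_self v G)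
    have hxG : x ∉ G := fun h => mem_compl.1 hx (mem_insert_of_mem h)
    have herase : (insert x (insert v G)).erase v = insert x G := by
      rw [Finset.insert_comm, erase_insert (by simp [hxv.symm, hv])]
    rw [cone_apply, if_pos (mem_insert_of_mem (mem_insert_self v G)), herase]
    linear_combination f (insert x G) * signBelow_insert_mul_signBelow_insert (k := k) hxv hxG hv
  rw [fullBoundary_apply, sum_congr rfl hcancel, sum_neg_distrib, cone_apply,
    if_pos (mem_insert_self v G), erase_insert hv, fullBoundary_apply, hGc,
    sum_insert (notMem_compl.2 (mem_insert_self v G)), mul_add, mul_sum, signBelow_insert_self,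
    ← mul_assoc, signBelow_mul_self, one_mul]
  ring

theorem fullBoundary_cone_add_cone_fullBoundary (v : Fin n) (f : FullChains k n) :
    fullBoundary k (cone k v f) + cone k v (fullBoundary k f) = f := by
  ext G
  by_cases hvG : v ∈ G
  · rw [Pi.add_apply, ← insert_erase hvG]
    exact fullBoundary_cone_add_cone_fullBoundary_apply_insert (notMem_erase v G) f
  · rw [Pi.add_apply, fullBoundary_cone_apply_of_notMem hvG, cone_apply, if_neg hvG, add_zero]

end Cone

noncomputable def proj (S : Set (Finset (Fin n))) : FullChains k n →ₗ[k] FullChains k n where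
  toFun f := S.indicator f
  map_add' := S.indicator_add'
  map_smul' c f := S.indicator_const_smul c f

section Support

variable {k}

def SupportedIn (S : Set (Finset (Fin n))) (m : ℤ) (f : FullChains k n) : Prop :=
  Function.support f ⊆ S ∩ {F | (#F : ℤ) = m}

theorem proj_apply (S : Set (Finset (Fin n))) (f : FullChains k n) :
    proj k S f = S.indicator f := rfl

theorem SupportedIn.mono {S T : Set (Finset (Fin n))} {m : ℤ} {f : FullChains k n}
    (hf : SupportedIn S m f) (hST : S ⊆ T) : SupportedIn T m f :=
  hf.trans (Set.inter_subset_inter_left _ hST)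

theorem SupportedIn.sub {S : Set (Finset (Fin n))} {m : ℤ} {f g : FullChains k n}
    (hf : SupportedIn S m f) (hg : SupportedIn S m g) : SupportedIn S m (f - g) :=
  (Function.support_sub f g).trans (Set.union_subset hf hg)

theorem supportedIn_proj {S T : Set (Finset (Fin n))} {m : ℤ} {f : FullChains k n}
    (hf : SupportedIn S m f) : SupportedIn T m (proj k T f) := by
  rw [SupportedIn, proj_apply, Set.support_indicator]
  exact Set.inter_subset_inter_right T (hf.trans Set.inter_subset_right)

theorem exists_ne_zero_of_fullBoundary_apply_ne_zero {f : FullChains k n} {G : Finset (Fin n)}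
    (h : fullBoundary k f G ≠ 0) : ∃ x ∉ G, f (insert x G) ≠ 0 := by
  obtain ⟨x, hx, hne⟩ := exists_ne_zero_of_sum_ne_zero h
  exact ⟨x, mem_compl.1 hx, right_ne_zero_of_mul hne⟩

theorem support_fullBoundary_subset {S : Set (Finset (Fin n))} (hS : IsLowerSet S)
    {f : FullChains k n} (hf : Function.support f ⊆ S) :
    Function.support (fullBoundary k f) ⊆ S := fun G hG => by
  obtain ⟨x, -, hx⟩ := exists_ne_zero_of_fullBoundary_apply_ne_zero hG
  exact hS (subset_insert x G) (hf hx)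

theorem supportedIn_fullBoundary {S : Set (Finset (Fin n))} (hS : IsLowerSet S) {m : ℤ}
    {f : FullChains k n} (hf : SupportedIn S m f) :
    SupportedIn S (m - 1) (fullBoundary k f) := fun G hG => by
  obtain ⟨x, hxG, hx⟩ := exists_ne_zero_of_fullBoundary_apply_ne_zero hG
  obtain ⟨hxS, hcard⟩ := hf hx
  refine ⟨hS (subset_insert x G) hxS, ?_⟩
  rw [Set.mem_ofPred_eq, card_insert_of_notMem hxG] at hcard
  simp only [Set.mem_ofPred_eq]
  omega

theorem proj_fullBoundary_of_isLowerSet {S : Set (Finset (Fin n))} (hS : IsLowerSet S)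
    {f : FullChains k n} (hf : Function.support f ⊆ S) :
    proj k S (fullBoundary k f) = fullBoundary k f :=
  Set.indicator_eq_self.2 (support_fullBoundary_subset hS hf)

theorem proj_fullBoundary_proj_fullBoundary {S : Set (Finset (Fin n))} (hS : S.OrdConnected)
    {f : FullChains k n} (hf : Function.support f ⊆ S) :
    proj k S (fullBoundary k (proj k S (fullBoundary k f))) = 0 := by
  ext G
  rw [proj_apply, Pi.zero_apply, Set.indicator_apply_eq_zero]
  intro hG
  calc fullBoundary k (proj k S (fullBoundary k f)) G = fullBoundary k (fullBoundary k f) G := by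
        refine sum_congr rfl fun x _ => congrArg _ ?_
        by_cases hxS : insert x G ∈ S
        · exact Set.indicator_of_mem hxS _
        rw [proj_apply, Set.indicator_of_notMem hxS, eq_comm]
        by_contra hne
        obtain ⟨y, -, hy⟩ := exists_ne_zero_of_fullBoundary_apply_ne_zero hne
        exact hxS (hS.out hG (hf hy) ⟨subset_insert x G, subset_insert y _⟩)
    _ = 0 := by rw [fullBoundary_fullBoundary, Pi.zero_apply]

end Support

section Simplex

variable {k}

theorem supportedIn_cone {R : Finset (Fin n)} {v : Fin n} (hv : v ∈ R) {m : ℤ}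
    {f : FullChains k n} (hf : SupportedIn (Set.Iic R) m f) :
    SupportedIn (Set.Iic R) (m + 1) (cone k v f) := fun F hF => by
  rw [Function.mem_support, cone_apply] at hF
  split_ifs at hF with hvF
  · obtain ⟨hsub, hcard⟩ := hf (right_ne_zero_of_mul hF)
    refine ⟨?_, ?_⟩
    · rw [← insert_erase hvF]
      exact insert_subset hv hsub
    · have := card_erase_add_one hvF
      simp only [Set.mem_ofPred_eq] at hcard ⊢
      omega
  · exact absurd rfl hF

theorem exists_fullBoundary_eq_of_supportedIn_Iic {R : Finset (Fin n)} {v : Fin n} (hv : v ∈ R)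
    {m : ℤ} {f : FullChains k n} (hf : SupportedIn (Set.Iic R) m f)
    (hcycle : fullBoundary k f = 0) :
    ∃ g, SupportedIn (Set.Iic R) (m + 1) g ∧ fullBoundary k g = f := by
  refine ⟨cone k v f, supportedIn_cone hv hf, ?_⟩
  simpa [hcycle] using fullBoundary_cone_add_cone_fullBoundary v f

end Simplex

-- `m` counts vertices: this is exactness in homological degree `m - 1`.
def ExactAt (S : Set (Finset (Fin n))) (m : ℤ) : Prop :=
  ∀ f : FullChains k n, SupportedIn S m f → proj k S (fullBoundary k f) = 0 →
    ∃ g, SupportedIn S (m + 1) g ∧ proj k S (fullBoundary k g) = f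

section Exactness

variable {k} {Δ : Set (Finset (Fin n))} {R : Finset (Fin n)}

theorem exactAt_Iic {m : ℤ} (hm : 1 ≤ m) : ExactAt k (Set.Iic R) m := by
  intro f hf hcycle
  rw [proj_fullBoundary_of_isLowerSet (isLowerSet_Iic R) (hf.trans Set.inter_subset_left)]
    at hcycle
  obtain ⟨g, hg, hgf⟩ : ∃ g, SupportedIn (Set.Iic R) (m + 1) g ∧ fullBoundary k g = f := by
    rcases R.eq_empty_or_nonempty with rfl | ⟨v, hv⟩
    · refine ⟨0, by simp [SupportedIn], ?_⟩
      ext F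
      rw [map_zero, eq_comm]
      by_contra hF
      obtain ⟨hF, hcard⟩ := hf hF
      rw [Set.mem_Iic, subset_empty] at hF
      simp only [hF, Set.mem_ofPred_eq, card_empty, Nat.cast_zero] at hcard
      omega
    · exact exists_fullBoundary_eq_of_supportedIn_Iic hv hf hcycle
  exact ⟨g, hg, by
    rw [proj_fullBoundary_of_isLowerSet (isLowerSet_Iic R) (hg.trans Set.inter_subset_left), hgf]⟩

theorem isLowerSet_restrict (hΔ : IsLowerSet Δ) (R : Finset (Fin n)) :
    IsLowerSet (restrict Δ R) :=
  hΔ.inter (isLowerSet_Iic R)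

theorem proj_sdiff_eq_zero {f : FullChains k n} (hf : Function.support f ⊆ restrict Δ R) :
    proj k (Set.Iic R \ Δ) f = 0 :=
  Set.indicator_eq_zero'.2 (Set.disjoint_left.2 fun _ hF hB => hB.2 (hf hF).1)

theorem supportedIn_restrict_of_proj_eq_zero {m : ℤ} {f : FullChains k n}
    (hf : SupportedIn (Set.Iic R) m f) (h : proj k (Set.Iic R \ Δ) f = 0) :
    SupportedIn (restrict Δ R) m f := fun F hF => by
  obtain ⟨hFR, hcard⟩ := hf hF
  refine ⟨⟨by_contra fun hFΔ => hF ?_, hFR⟩, hcard⟩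
  rw [← Set.indicator_of_mem (show F ∈ Set.Iic R \ Δ from ⟨hFR, hFΔ⟩) f, ← proj_apply, h,
    Pi.zero_apply]

theorem proj_fullBoundary_proj_sdiff (hΔ : IsLowerSet Δ) {w : FullChains k n}
    (hw : Function.support w ⊆ Set.Iic R) :
    proj k (Set.Iic R \ Δ) (fullBoundary k (proj k (Set.Iic R \ Δ) w)) =
      proj k (Set.Iic R \ Δ) (fullBoundary k w) := by
  have hrest : Function.support (w - proj k (Set.Iic R \ Δ) w) ⊆ restrict Δ R := fun F hF => by
    by_cases hB : F ∈ Set.Iic R \ Δ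
    · simp [proj_apply, Set.indicator_of_mem hB] at hF
    · rw [Function.mem_support, proj_apply, Pi.sub_apply, Set.indicator_of_notMem hB,
        sub_zero] at hF
      exact ⟨by_contra fun hFΔ => hB ⟨hw hF, hFΔ⟩, hw hF⟩
  have := proj_sdiff_eq_zero (support_fullBoundary_subset (isLowerSet_restrict hΔ R) hrest)
  rw [map_sub, map_sub, sub_eq_zero] at this
  exact this.symm

-- `Set.Iic R \ Δ` carries the relative complex of the pair `(2^R, Δ_R)`; as `2^R` is acyclic, the
-- connecting map of the pair is an isomorphism.
theorem exactAt_sdiff_of_exactAt_restrict (hΔ : IsLowerSet Δ) {v : Fin n} (hv : v ∈ R)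
    {m : ℤ} (h : ExactAt k (restrict Δ R) m) : ExactAt k (Set.Iic R \ Δ) (m + 1) := by
  intro z hz hcycle
  have hzR : SupportedIn (Set.Iic R) (m + 1) z := hz.mono Set.sdiff_subset
  have hy : SupportedIn (restrict Δ R) m (fullBoundary k z) := by
    have := supportedIn_fullBoundary (isLowerSet_Iic R) hzR
    rw [add_sub_cancel_right] at this
    exact supportedIn_restrict_of_proj_eq_zero this hcycle
  obtain ⟨g, hg, hgz⟩ := h _ hy (by
    rw [proj_fullBoundary_of_isLowerSet (isLowerSet_restrict hΔ R)
      (hy.trans Set.inter_subset_left), fullBoundary_fullBoundary])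
  rw [proj_fullBoundary_of_isLowerSet (isLowerSet_restrict hΔ R)
    (hg.trans Set.inter_subset_left)] at hgz
  obtain ⟨w, hw, hwzg⟩ := exists_fullBoundary_eq_of_supportedIn_Iic hv
    (hzR.sub (hg.mono fun _ hF => hF.2)) (by rw [map_sub, hgz, sub_self])
  refine ⟨proj k (Set.Iic R \ Δ) w, supportedIn_proj hw, ?_⟩
  rw [proj_fullBoundary_proj_sdiff hΔ (hw.trans Set.inter_subset_left), hwzg, map_sub,
    proj_sdiff_eq_zero (hg.trans Set.inter_subset_left), sub_zero, proj_apply,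
    Set.indicator_eq_self.2 (hz.trans Set.inter_subset_left)]

theorem exactAt_restrict_of_exactAt_sdiff (hΔ : IsLowerSet Δ) {v : Fin n} (hv : v ∈ R)
    {m : ℤ} (h : ExactAt k (Set.Iic R \ Δ) (m + 1)) : ExactAt k (restrict Δ R) m := by
  intro f hf hcycle
  have hfΔ := hf.trans Set.inter_subset_left
  rw [proj_fullBoundary_of_isLowerSet (isLowerSet_restrict hΔ R) hfΔ] at hcycle
  obtain ⟨w, hw, hwf⟩ :=
    exists_fullBoundary_eq_of_supportedIn_Iic hv (hf.mono fun _ hF => hF.2) hcycle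
  obtain ⟨u, hu, huw⟩ := h _ (supportedIn_proj hw) (by
    rw [proj_fullBoundary_proj_sdiff hΔ (hw.trans Set.inter_subset_left), hwf,
      proj_sdiff_eq_zero hfΔ])
  have hdu : SupportedIn (Set.Iic R) (m + 1) (fullBoundary k u) := by
    have := supportedIn_fullBoundary (isLowerSet_Iic R) (hu.mono Set.sdiff_subset)
    rwa [add_sub_cancel_right] at this
  have hg : SupportedIn (restrict Δ R) (m + 1) (w - fullBoundary k u) :=
    supportedIn_restrict_of_proj_eq_zero (hw.sub hdu) (by rw [map_sub, huw, sub_self])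
  refine ⟨w - fullBoundary k u, hg, ?_⟩
  rw [proj_fullBoundary_of_isLowerSet (isLowerSet_restrict hΔ R) (hg.trans Set.inter_subset_left),
    map_sub, hwf, fullBoundary_fullBoundary, sub_zero]

theorem exactAt_restrict_iff (hΔ : IsLowerSet Δ) {v : Fin n} (hv : v ∈ R) (m : ℤ) :
    ExactAt k (restrict Δ R) m ↔ ExactAt k (Set.Iic R \ Δ) (m + 1) :=
  ⟨exactAt_sdiff_of_exactAt_restrict hΔ hv, exactAt_restrict_of_exactAt_sdiff hΔ hv⟩

end Exactness

open Classical in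
noncomputable def extendByZero (Δ' : Set (Finset (Fin n))) (p : ℤ) :
    Chains k Δ' p →ₗ[k] FullChains k n where
  toFun f F := if h : F ∈ Δ' ∧ (#F : ℤ) = p + 1 then f ⟨F, h⟩ else 0
  map_add' f g := by
    ext F
    dsimp only [Pi.add_apply]
    split_ifs <;> simp only [add_zero]
  map_smul' c f := by
    ext F
    dsimp only [Pi.smul_apply, smul_eq_mul, RingHom.id_apply]
    split_ifs <;> simp only [mul_zero]

section ExtendByZero

variable {k} (Δ' : Set (Finset (Fin n)))

theorem extendByZero_apply {p : ℤ} (f : Chains k Δ' p) {F : Finset (Fin n)}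
    (hF : F ∈ Δ' ∧ (#F : ℤ) = p + 1) : extendByZero k Δ' p f F = f ⟨F, hF⟩ := by
  simp only [extendByZero, LinearMap.coe_mk, AddHom.coe_mk, dif_pos hF]

theorem extendByZero_apply_of_not {p : ℤ} (f : Chains k Δ' p) {F : Finset (Fin n)}
    (hF : ¬(F ∈ Δ' ∧ (#F : ℤ) = p + 1)) : extendByZero k Δ' p f F = 0 := by
  simp only [extendByZero, LinearMap.coe_mk, AddHom.coe_mk, dif_neg hF]

theorem supportedIn_extendByZero {p : ℤ} (f : Chains k Δ' p) :
    SupportedIn Δ' (p + 1) (extendByZero k Δ' p f) := fun _ hF =>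
  by_contra fun h => hF (extendByZero_apply_of_not Δ' f h)

theorem extendByZero_injective (p : ℤ) : Function.Injective (extendByZero k Δ' p) :=
  fun f g h => funext fun F => by
    rw [← extendByZero_apply Δ' f F.2, ← extendByZero_apply Δ' g F.2, h]

theorem exists_extendByZero_eq {p : ℤ} {f : FullChains k n} (hf : SupportedIn Δ' (p + 1) f) :
    ∃ g : Chains k Δ' p, extendByZero k Δ' p g = f :=
  ⟨fun F => f F, funext fun F => by
    by_cases h : F ∈ Δ' ∧ (#F : ℤ) = p + 1
    · exact extendByZero_apply Δ' _ h
    · rw [extendByZero_apply_of_not Δ' _ h, eq_comm]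
      exact Function.notMem_support.1 fun hF => h (hf hF)⟩

theorem extendByZero_chainsCongr {p q : ℤ} (h : p = q) (f : Chains k Δ' p) :
    extendByZero k Δ' q (chainsCongr k Δ' h f) = extendByZero k Δ' p f := by
  subst h; rfl

theorem extendByZero_boundary (p : ℤ) (f : Chains k Δ' p) :
    extendByZero k Δ' (p - 1) (boundary k Δ' p f) =
      proj k Δ' (fullBoundary k (extendByZero k Δ' p f)) := by
  classical
  ext G
  by_cases hG : G ∈ Δ' ∧ (#G : ℤ) = p - 1 + 1
  · rw [extendByZero_apply Δ' _ hG, proj_apply, Set.indicator_of_mem hG.1, fullBoundary_apply,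
      ← univ_inter Gᶜ, ← sum_ite_mem]
    change boundaryFun k Δ' p f ⟨G, hG⟩ = _
    unfold boundaryFun
    refine sum_congr rfl fun x _ => ?_
    by_cases hx : x ∉ G ∧ insert x G ∈ Δ'
    · have hcard : (#(insert x G) : ℤ) = p + 1 := by
        rw [card_insert_of_notMem hx.1, Nat.cast_succ, hG.2, sub_add_cancel]
      rw [extendByZero_apply Δ' f ⟨hx.2, hcard⟩, if_pos (mem_compl.2 hx.1)]
      exact dif_pos hx
    · refine (dif_neg hx).trans ?_
      split_ifs with hxG
      · rw [extendByZero_apply_of_not Δ' f fun h => hx ⟨mem_compl.1 hxG, h.1⟩, mul_zero]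
      · rfl
  · rw [extendByZero_apply_of_not Δ' _ hG, eq_comm, proj_apply, Set.indicator_apply_eq_zero]
    intro hGΔ
    by_contra hne
    have hcard := (supportedIn_fullBoundary isLowerSet_univ
      ((supportedIn_extendByZero Δ' f).mono (Set.subset_univ _)) hne).2
    exact hG ⟨hGΔ, by simpa using hcard⟩

end ExtendByZero

theorem ker_le_range_iff_finrank_add {K U W X : Type*} [Field K] [AddCommGroup U] [Module K U]
    [AddCommGroup W] [Module K W] [AddCommGroup X] [Module K X] [FiniteDimensional K W]
    (B : W →ₗ[K] X) (C : U →ₗ[K] W) (h : LinearMap.range C ≤ LinearMap.ker B) :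
    LinearMap.ker B ≤ LinearMap.range C ↔
      Module.finrank K (LinearMap.range B) + Module.finrank K (LinearMap.range C) =
        Module.finrank K W := by
  rw [← LinearMap.finrank_range_add_finrank_ker B, add_right_inj]
  exact ⟨fun h' => by rw [le_antisymm h h'], fun h' => (Submodule.eq_of_le_of_finrank_eq h h').ge⟩

theorem finrank_range_eq_rank_toMatrix' {K ι κ : Type*} [Field K] [Fintype ι] [DecidableEq ι]
    (φ : (ι → K) →ₗ[K] (κ → K)) :
    Module.finrank K (LinearMap.range φ) = (LinearMap.toMatrix' φ).rank := by
  rw [Matrix.rank, ← Matrix.toLin'_apply', Matrix.toLin'_toMatrix']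

section Homology

variable {k} (Δ' : Set (Finset (Fin n)))

theorem subsingleton_reducedHomology_iff (p : ℤ) :
    Subsingleton (ReducedHomology k Δ' p) ↔ cycles k Δ' p ≤ boundaries k Δ' p := by
  rw [Submodule.Quotient.subsingleton_iff, Submodule.comap_subtype_eq_top]

theorem mem_boundaries_iff {p : ℤ} (f : Chains k Δ' p) :
    f ∈ boundaries k Δ' p ↔ ∃ g : Chains k Δ' (p + 1),
      extendByZero k Δ' (p + 1 - 1) (boundary k Δ' (p + 1) g) = extendByZero k Δ' p f := by
  simp only [boundaries, LinearMap.mem_range, LinearMap.comp_apply, LinearEquiv.coe_coe,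
    ← extendByZero_chainsCongr Δ' (show p + 1 - 1 = p by ring),
    (extendByZero_injective Δ' p).eq_iff]

theorem cycles_le_boundaries_iff_exactAt (p : ℤ) :
    cycles k Δ' p ≤ boundaries k Δ' p ↔ ExactAt k Δ' (p + 1) := by
  constructor
  · intro h F hF hcycle
    obtain ⟨f, rfl⟩ := exists_extendByZero_eq Δ' hF
    have hf : f ∈ cycles k Δ' p := extendByZero_injective Δ' (p - 1) <| by
      rw [extendByZero_boundary, hcycle, map_zero]
    obtain ⟨g, hg⟩ := (mem_boundaries_iff Δ' f).1 (h hf)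
    exact ⟨extendByZero k Δ' (p + 1) g, supportedIn_extendByZero Δ' g,
      by rw [← extendByZero_boundary, hg]⟩
  · intro h f hf
    obtain ⟨G, hG, hGf⟩ := h _ (supportedIn_extendByZero Δ' f) (by
      rw [← extendByZero_boundary, LinearMap.mem_ker.1 hf, map_zero])
    obtain ⟨g, rfl⟩ := exists_extendByZero_eq Δ' hG
    exact (mem_boundaries_iff Δ' f).2 ⟨g, by rw [extendByZero_boundary, hGf]⟩

theorem boundaries_le_cycles (hΔ' : Δ'.OrdConnected) (p : ℤ) :
    boundaries k Δ' p ≤ cycles k Δ' p := by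
  intro f hf
  obtain ⟨g, hg⟩ := (mem_boundaries_iff Δ' f).1 hf
  refine extendByZero_injective Δ' (p - 1) ?_
  rw [extendByZero_boundary, ← hg, extendByZero_boundary, map_zero]
  exact proj_fullBoundary_proj_fullBoundary hΔ'
    ((supportedIn_extendByZero Δ' g).trans Set.inter_subset_left)

theorem cycles_le_boundaries_iff_finrank (hΔ' : Δ'.OrdConnected) (p : ℤ) :
    cycles k Δ' p ≤ boundaries k Δ' p ↔
      Module.finrank k (LinearMap.range (boundary k Δ' p)) +
        Module.finrank k (LinearMap.range (boundary k Δ' (p + 1))) =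
      Module.finrank k (Chains k Δ' p) := by
  have hrange := LinearMap.range_comp (boundary k Δ' (p + 1))
    (chainsCongr k Δ' (show p + 1 - 1 = p by ring)).toLinearMap
  rw [cycles, boundaries, ker_le_range_iff_finrank_add _ _ (boundaries_le_cycles Δ' hΔ' p),
    hrange, LinearEquiv.finrank_map_eq]

end Homology

abbrev Faces (Δ' : Set (Finset (Fin n))) (p : ℤ) : Type :=
  {F : Finset (Fin n) // F ∈ Δ' ∧ (#F : ℤ) = p + 1}

open Classical in
noncomputable instance (Δ' : Set (Finset (Fin n))) (p : ℤ) : Fintype (Faces Δ' p) :=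
  Subtype.fintype _

-- The diagonal change of signs that turns the boundary matrices of the link into the transposed
-- ones of the relative complex.
def signProd (R A : Finset (Fin n)) : k := ∏ y ∈ A, signBelow k R y

section Duality

variable {k} {Δ : Set (Finset (Fin n))} {R : Finset (Fin n)}

theorem signProd_mul_self (R A : Finset (Fin n)) : signProd k R A * signProd k R A = 1 := by
  rw [signProd, ← prod_mul_distrib]
  exact prod_eq_one fun y _ => signBelow_mul_self R y

theorem signBelow_eq_signProd_mul {G : Finset (Fin n)} {x : Fin n} (hR : insert x G ⊆ R)
    (hx : x ∉ G) :
    signBelow k G x =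
      signProd k R G * signBelow k (R \ insert x G) x * signProd k R (insert x G) := by
  have hxR : x ∈ R \ G := mem_sdiff.2 ⟨hR (mem_insert_self x G), hx⟩
  have hsplit := signBelow_sdiff_mul (k := k) ((subset_insert x G).trans hR) x
  rw [← insert_erase hxR, signBelow_insert_self, ← sdiff_insert] at hsplit
  have hins : signProd k R (insert x G) = signBelow k R x * signProd k R G := prod_insert hx
  rw [hins, ← hsplit]
  linear_combination -(signBelow k G x * signBelow k (R \ insert x G) x ^ 2) *
    signProd_mul_self (k := k) R G -
      signBelow k G x * signBelow_mul_self (k := k) (R \ insert x G) x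

theorem mem_link_dual_compl {G : Finset (Fin n)} :
    G ∈ link (dual Δ) Rᶜ ↔ G ⊆ R ∧ R \ G ∉ Δ := by
  have hcompl : (G ∪ Rᶜ)ᶜ = R \ G := by
    rw [compl_union, compl_compl, sdiff_eq_inter_compl, inter_comm]
  simp only [link, dual, Set.mem_ofPred_eq, hcompl, disjoint_compl_right_iff]

theorem isLowerSet_link_dual_compl (hΔ : IsLowerSet Δ) : IsLowerSet (link (dual Δ) Rᶜ) :=
  fun G G' hG'G hG => by
    obtain ⟨hGR, hRG⟩ := mem_link_dual_compl.1 hG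
    exact mem_link_dual_compl.2
      ⟨hG'G.trans hGR, fun h => hRG (hΔ (sdiff_subset_sdiff le_rfl hG'G) h)⟩

theorem ordConnected_Iic_sdiff (hΔ : IsLowerSet Δ) : (Set.Iic R \ Δ).OrdConnected :=
  (isLowerSet_Iic R).ordConnected.inter hΔ.compl.ordConnected

def sdiffEquiv (a b : ℤ) (hab : a + b + 2 = #R) :
    Faces (link (dual Δ) Rᶜ) a ≃ Faces (Set.Iic R \ Δ) b where
  toFun G := ⟨R \ G.1, ⟨sdiff_subset, (mem_link_dual_compl.1 G.2.1).2⟩, by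
    rw [cast_card_sdiff (mem_link_dual_compl.1 G.2.1).1, G.2.2]
    omega⟩
  invFun F := ⟨R \ F.1, mem_link_dual_compl.2 ⟨sdiff_subset, by
    rw [Finset.sdiff_sdiff_eq_self F.2.1.1]
    exact F.2.1.2⟩, by
    rw [cast_card_sdiff F.2.1.1, F.2.2]
    omega⟩
  left_inv G := Subtype.ext (Finset.sdiff_sdiff_eq_self (mem_link_dual_compl.1 G.2.1).1)
  right_inv F := Subtype.ext (Finset.sdiff_sdiff_eq_self F.2.1.1)

theorem insert_sdiff_eq_sdiff_iff {G G' : Finset (Fin n)} (hG : G ⊆ R) (hG' : G' ⊆ R)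
    (x : Fin n) :
    (x ∉ R \ G ∧ insert x (R \ G) = R \ G') ↔ (x ∉ G' ∧ insert x G' = G) := by
  constructor
  · rintro ⟨hx, h⟩
    have hxR : x ∈ R \ G' := h ▸ mem_insert_self x _
    have hxG : x ∈ G := by_contra fun hxG => hx (mem_sdiff.2 ⟨(mem_sdiff.1 hxR).1, hxG⟩)
    refine ⟨(mem_sdiff.1 hxR).2, ?_⟩
    rw [← Finset.sdiff_sdiff_eq_self hG', ← h, sdiff_insert, Finset.sdiff_sdiff_eq_self hG,
      insert_erase hxG]
  · rintro ⟨hx, rfl⟩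
    refine ⟨fun h => (mem_sdiff.1 h).2 (mem_insert_self x G'), ?_⟩
    rw [sdiff_insert, insert_erase (mem_sdiff.2 ⟨hG (mem_insert_self x G'), hx⟩)]

theorem toMatrix'_boundary_apply (Δ' : Set (Finset (Fin n))) (p : ℤ)
    (G' : Faces Δ' (p - 1)) (G : Faces Δ' p) :
    LinearMap.toMatrix' (boundary k Δ' p) G' G =
      ∑ x, if x ∉ G'.1 ∧ insert x G'.1 = G.1 then signBelow k G'.1 x else 0 := by
  rw [LinearMap.toMatrix'_apply]
  change boundaryFun k Δ' p _ G' = _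
  unfold boundaryFun
  refine sum_congr rfl fun x _ => ?_
  by_cases hx : x ∉ G'.1 ∧ insert x G'.1 = G.1
  · rw [dif_pos ⟨hx.1, hx.2 ▸ G.2.1⟩, if_pos hx, Pi.single_apply, if_pos (Subtype.ext hx.2),
      mul_one]
    rfl
  · rw [if_neg hx]
    split_ifs with h
    · rw [Pi.single_apply, if_neg fun h' => hx ⟨h.1, congrArg Subtype.val h'⟩, mul_zero]
    · rfl

theorem toMatrix'_boundary_link_dual_compl (q j : ℤ) (h₁ : q + (j - 1) + 2 = #R)
    (h₂ : q - 1 + j + 2 = #R)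
    (G' : Faces (link (dual Δ) Rᶜ) (q - 1)) (G : Faces (link (dual Δ) Rᶜ) q) :
    LinearMap.toMatrix' (boundary k (link (dual Δ) Rᶜ) q) G' G =
      signProd k R G'.1 *
        LinearMap.toMatrix' (boundary k (Set.Iic R \ Δ) j)
          (sdiffEquiv q (j - 1) h₁ G) (sdiffEquiv (q - 1) j h₂ G') *
        signProd k R G.1 := by
  rw [toMatrix'_boundary_apply, toMatrix'_boundary_apply, mul_sum, sum_mul]
  refine sum_congr rfl fun x _ => ?_
  have hiff := insert_sdiff_eq_sdiff_iff (mem_link_dual_compl.1 G.2.1).1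
    (mem_link_dual_compl.1 G'.2.1).1 x
  split_ifs with h h' h''
  · obtain ⟨hx, hxG⟩ := h
    have hsign := signBelow_eq_signProd_mul (k := k)
      (hxG ▸ (mem_link_dual_compl.1 G.2.1).1 : insert x G'.1 ⊆ R) hx
    rw [hxG] at hsign
    exact hsign
  · exact absurd (hiff.2 h) h'
  · exact absurd (hiff.1 h'') h
  · rw [mul_zero, zero_mul]

theorem det_diagonal_signProd_ne_zero {ι : Type*} [Fintype ι] [DecidableEq ι]
    (A : ι → Finset (Fin n)) : (Matrix.diagonal fun i => signProd k R (A i)).det ≠ 0 := by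
  rw [Matrix.det_diagonal]
  exact prod_ne_zero_iff.2 fun i _ => left_ne_zero_of_mul_eq_one (signProd_mul_self R (A i))

theorem finrank_range_boundary_link_dual_compl (q j : ℤ) (hqj : q + j + 1 = #R) :
    Module.finrank k (LinearMap.range (boundary k (link (dual Δ) Rᶜ) q)) =
      Module.finrank k (LinearMap.range (boundary k (Set.Iic R \ Δ) j)) := by
  have h₁ : q + (j - 1) + 2 = #R := by omega
  have h₂ : q - 1 + j + 2 = #R := by omega
  have hmatrix : LinearMap.toMatrix' (boundary k (link (dual Δ) Rᶜ) q) =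
      Matrix.diagonal (fun G' : Faces (link (dual Δ) Rᶜ) (q - 1) => signProd k R G'.1) *
        (LinearMap.toMatrix' (boundary k (Set.Iic R \ Δ) j)).transpose.submatrix
          (sdiffEquiv (q - 1) j h₂) (sdiffEquiv q (j - 1) h₁) *
        Matrix.diagonal (fun G : Faces (link (dual Δ) Rᶜ) q => signProd k R G.1) := by
    ext G' G
    rw [Matrix.mul_diagonal, Matrix.diagonal_mul, Matrix.submatrix_apply, Matrix.transpose_apply,
      toMatrix'_boundary_link_dual_compl q j h₁ h₂]
  rw [finrank_range_eq_rank_toMatrix', finrank_range_eq_rank_toMatrix', hmatrix,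
    Matrix.rank_mul_eq_left_of_det_ne_zero _ _ (det_diagonal_signProd_ne_zero _),
    Matrix.rank_mul_eq_right_of_det_ne_zero _ _ (det_diagonal_signProd_ne_zero _),
    Matrix.rank_submatrix, Matrix.rank_transpose]

end Duality

section Main

variable {k} {Δ : Set (Finset (Fin n))} {R : Finset (Fin n)}

theorem cycles_le_boundaries_link_dual_compl_iff (hΔ : IsLowerSet Δ) {q j : ℤ}
    (hqj : q + j + 2 = #R) :
    cycles k (link (dual Δ) Rᶜ) q ≤ boundaries k (link (dual Δ) Rᶜ) q ↔
      cycles k (Set.Iic R \ Δ) j ≤ boundaries k (Set.Iic R \ Δ) j := by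
  rw [cycles_le_boundaries_iff_finrank _ (isLowerSet_link_dual_compl hΔ).ordConnected,
    cycles_le_boundaries_iff_finrank _ (ordConnected_Iic_sdiff hΔ),
    finrank_range_boundary_link_dual_compl q (j + 1) (by omega),
    finrank_range_boundary_link_dual_compl (q + 1) j (by omega), add_comm,
    (LinearEquiv.funCongrLeft k k (sdiffEquiv q j hqj)).finrank_eq]

theorem subsingleton_reducedHomology_restrict_iff_link (hΔ : IsLowerSet Δ) (hR : R.Nonempty)
    {p q : ℤ} (hpq : p + q + 3 = #R) :
    Subsingleton (ReducedHomology k (restrict Δ R) p) ↔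
      Subsingleton (ReducedHomology k (link (dual Δ) Rᶜ) q) := by
  obtain ⟨v, hv⟩ := hR
  rw [subsingleton_reducedHomology_iff, subsingleton_reducedHomology_iff,
    cycles_le_boundaries_link_dual_compl_iff hΔ (j := p + 1) (by omega),
    cycles_le_boundaries_iff_exactAt, cycles_le_boundaries_iff_exactAt, exactAt_restrict_iff hΔ hv]

theorem subsingleton_reducedHomology_restrict_of_mem (hΔ : IsLowerSet Δ) (hR : R ∈ Δ) {p : ℤ}
    (hp : 0 ≤ p) : Subsingleton (ReducedHomology k (restrict Δ R) p) := by
  have hrestrict : restrict Δ R = Set.Iic R :=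
    Set.ext fun F => ⟨fun h => h.2, fun h => ⟨hΔ h hR, h⟩⟩
  rw [subsingleton_reducedHomology_iff, cycles_le_boundaries_iff_exactAt, hrestrict]
  exact exactAt_Iic (by omega)

theorem cast_card_compl (s : Finset (Fin n)) : (#sᶜ : ℤ) = n - #s := by
  have := card_le_univ s
  rw [Fintype.card_fin] at this
  rw [card_compl, Fintype.card_fin]
  omega

theorem add_add_one_eq_of_isFrame_of_isDim {c ds : ℕ} (hc : IsFrame Δ c)
    (hds : IsDim (dual Δ) ds) : (c : ℤ) + ds + 1 = n := by
  obtain ⟨F, hFc, hF⟩ := hc.2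
  obtain ⟨G, hG, hGds⟩ := hds.2
  have hF' : Fᶜ ∈ dual Δ := by rwa [dual, Set.mem_ofPred_eq, compl_compl]
  have hle := hds.1 _ hF'
  have hlt : ¬#Gᶜ ≤ c := fun h => hG (hc.1 _ h)
  have := cast_card_compl F
  have := cast_card_compl G
  have := card_le_univ F
  rw [Fintype.card_fin] at this
  omega

end Main

/-- `Δ` is CLeray iff `Δ*` is Cohen-Macaulay. -/
theorem stmt4 (k : Type) [Field k] {n : ℕ} (Δ : Set (Finset (Fin n)))
    (hΔ : IsComplex Δ) (c ds : ℕ) (hc : IsFrame Δ c)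
    (hds : IsDim (dual Δ) ds) :
    (∀ p : ℤ, (c : ℤ) ≤ p → ∀ R : Finset (Fin n),
        Subsingleton (ReducedHomology k (restrict Δ R) p)) ↔
    (∀ S ∈ dual Δ, ∀ p : ℤ, p + S.card ≤ (ds : ℤ) - 2 →
        Subsingleton (ReducedHomology k (link (dual Δ) S) p)) := by
  have hn := add_add_one_eq_of_isFrame_of_isDim hc hds
  have hlower : IsLowerSet Δ := fun _ _ hGF hF => hΔ _ hF _ hGF
  have hne : ∀ R ∉ Δ, R.Nonempty := fun R hR =>
    nonempty_iff_ne_empty.2 fun h => hR (h ▸ hc.1 ∅ (by simp))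
  constructor
  · intro H S hS q hq
    rw [← compl_compl S] at hq ⊢
    have := cast_card_compl Sᶜ
    exact (subsingleton_reducedHomology_restrict_iff_link hlower (hne _ hS)
      (p := #Sᶜ - q - 3) (by omega)).1 (H _ (by omega) _)
  · intro H p hp R
    by_cases hR : R ∈ Δ
    · exact subsingleton_reducedHomology_restrict_of_mem hlower hR (by omega)
    · have hRc : Rᶜ ∈ dual Δ := by rwa [dual, Set.mem_ofPred_eq, compl_compl]
      have := cast_card_compl R
      exact (subsingleton_reducedHomology_restrict_iff_link hlower (hne R hR)
        (q := #R - p - 3) (by omega)).2 (H _ hRc _ (by omega))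

end SCx
end

section
/- A simplicial complex Δ on [n] of dimension d-1 is Cohen-Macaulay (in the sense of Reisner's criterion) if and only if H̃_p(Δ_{-R}) = 0 for all subsets R ⊆ [n] with p + |R| = d - 2, where Δ_{-R} denotes the restriction of Δ to [n]\R. -/
/-!
All chain complexes live in one space, the functions on `Finset (Fin n)` with the boundary of the
full simplex; the chains of `Δ` are the functions supported on its faces. For a vertex `x`,
contraction at `x` maps the chains of `Δ` onto those of `lk x`, shifted down by one, with kernel
the chains of the deletion `Δ_{-x}`; in the resulting long exact sequence, vanishing for two of
`Δ_{-x}`, `lk x`, `Δ` in suitable degrees gives vanishing for the third.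

Cohen–Macaulay implies `H̃_p((lk S)_{-R}) = 0` for `p + |S| + |R| ≤ d - 2`, by induction on `R`.
Conversely, induct on `d` with a ground set `W` carrying all faces: the critical vanishing
`p + |R| = d - 2` passes from `Δ` to each vertex link (on `W \ {x}`, in dimension one less), the
vertex links then spread it to all `p + |R| ≤ d - 2` (here `d ≤ |W|` supplies a fresh vertex to
delete), and links of larger faces are links inside vertex links.
-/

open Finset

namespace SCx

variable (k : Type) [Field k] {n : ℕ}

section Combinatorics

variable {Δ : Set (Finset (Fin n))} {S T U R : Finset (Fin n)} {x : Fin n}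

lemma restrict_subset : restrict Δ U ⊆ Δ :=
  fun _ hF => hF.1

lemma isComplex_restrict (hΔ : IsComplex Δ) (U : Finset (Fin n)) : IsComplex (restrict Δ U) :=
  fun _ hF _ hG => ⟨hΔ _ hF.1 _ hG, hG.trans hF.2⟩

lemma isComplex_link (hΔ : IsComplex Δ) (S : Finset (Fin n)) : IsComplex (link Δ S) :=
  fun _ hF _ hG => ⟨disjoint_of_subset_left hG hF.1, hΔ _ hF.2 _ (union_subset_union hG le_rfl)⟩

lemma link_empty : link Δ ∅ = Δ := by
  ext F; simp [link]

lemma restrict_compl_empty : restrict Δ (∅ : Finset (Fin n))ᶜ = Δ := by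
  ext F; simp [restrict]

lemma empty_restrict : restrict (∅ : Set (Finset (Fin n))) U = ∅ := by
  ext F; simp [restrict]

lemma link_eq_empty (hΔ : IsComplex Δ) (hS : S ∉ Δ) : link Δ S = ∅ :=
  Set.eq_empty_of_forall_notMem fun _ hF => hS (hΔ _ hF.2 _ subset_union_right)

lemma restrict_restrict_compl : restrict (restrict Δ Rᶜ) {x}ᶜ = restrict Δ (insert x R)ᶜ := by
  ext F
  simp only [restrict, Set.mem_ofPred_eq, insert_eq, compl_union, subset_inter_iff]
  tauto

lemma link_restrict (h : S ⊆ U) : link (restrict Δ U) S = restrict (link Δ S) U := by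
  ext F
  simp only [link, restrict, Set.mem_ofPred_eq, union_subset_iff]
  tauto

lemma link_link (h : Disjoint S T) : link (link Δ S) T = link Δ (S ∪ T) := by
  ext F
  simp only [link, Set.mem_ofPred_eq, disjoint_union_left, disjoint_union_right,
    union_right_comm _ T S, union_assoc F S T]
  have := h.symm
  tauto

lemma link_eq_link_link_erase (hx : x ∈ S) : link Δ S = link (link Δ {x}) (S.erase x) := by
  rw [link_link (disjoint_singleton_left.mpr (notMem_erase x S)), ← insert_eq, insert_erase hx]

lemma erase_mem_link (hS : S ∈ Δ) (hx : x ∈ S) : S.erase x ∈ link Δ {x} :=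
  ⟨disjoint_singleton_right.mpr (notMem_erase x S), by rwa [union_singleton, insert_erase hx]⟩

lemma restrict_link_insert (hx : x ∈ S) :
    restrict (link Δ S) (insert x R)ᶜ = restrict (link Δ S) Rᶜ := by
  ext F
  simp only [restrict, link, Set.mem_ofPred_eq, compl_insert, subset_erase]
  exact ⟨fun h => ⟨h.1, h.2.1⟩, fun h => ⟨h.1, h.2, fun hxF => disjoint_left.mp h.1.1 hxF hx⟩⟩

end Combinatorics

noncomputable def insertSign (x : Fin n) (G : Finset (Fin n)) : k := (-1) ^ #{y ∈ G | y < x}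

noncomputable def simplexBoundary : (Finset (Fin n) → k) →ₗ[k] (Finset (Fin n) → k) :=
  LinearMap.pi fun G => ∑ y ∈ Gᶜ, insertSign k y G • LinearMap.proj (insert y G)

def supportedChains (Δ : Set (Finset (Fin n))) (p : ℤ) : Submodule k (Finset (Fin n) → k) where
  carrier := {u | Function.support u ⊆ {F | F ∈ Δ ∧ (#F : ℤ) = p + 1}}
  zero_mem' := by simp
  add_mem' hu hv := (Function.support_add _ _).trans (Set.union_subset hu hv)
  smul_mem' c _ hu := (Function.support_const_smul_subset c _).trans hu

def HomologyVanishes (Δ : Set (Finset (Fin n))) (p : ℤ) : Prop :=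
  ∀ u ∈ supportedChains k Δ p, simplexBoundary k u = 0 →
    ∃ v ∈ supportedChains k Δ (p + 1), simplexBoundary k v = u

section

variable {k} {Δ Δ' : Set (Finset (Fin n))} {p : ℤ} {x : Fin n} {u w : Finset (Fin n) → k}

lemma simplexBoundary_apply (u : Finset (Fin n) → k) (G : Finset (Fin n)) :
    simplexBoundary k u G = ∑ y ∈ Gᶜ, insertSign k y G * u (insert y G) := by
  simp [simplexBoundary]

lemma mem_supportedChains :
    u ∈ supportedChains k Δ p ↔ ∀ F, u F ≠ 0 → F ∈ Δ ∧ (#F : ℤ) = p + 1 :=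
  Function.support_subset_iff

lemma insertSign_mul_self (x : Fin n) (G : Finset (Fin n)) :
    insertSign k x G * insertSign k x G = 1 := by
  rw [insertSign, ← pow_add, ← two_mul, pow_mul, neg_one_sq, one_pow]

lemma insertSign_insert {x y : Fin n} {G : Finset (Fin n)} (hy : y ∉ G) :
    insertSign k x (insert y G) = (if y < x then -1 else 1) * insertSign k x G := by
  rw [insertSign, insertSign, filter_insert]
  split_ifs with h
  · rw [card_insert_of_notMem (by simp [hy]), pow_succ']
  · rw [one_mul]

lemma insertSign_antisymm {x y : Fin n} {G : Finset (Fin n)} (hxy : x ≠ y) (hx : x ∉ G)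
    (hy : y ∉ G) :
    insertSign k x G * insertSign k y (insert x G) =
      -(insertSign k y G * insertSign k x (insert y G)) := by
  rw [insertSign_insert hx, insertSign_insert hy]
  rcases hxy.lt_or_gt with h | h
  · rw [if_pos h, if_neg h.asymm]; ring
  · rw [if_neg h.asymm, if_pos h]; ring

lemma simplexBoundary_simplexBoundary (u : Finset (Fin n) → k) :
    simplexBoundary k (simplexBoundary k u) = 0 := by
  funext G
  simp only [simplexBoundary_apply, mul_sum, compl_insert, Pi.zero_apply]
  rw [sum_sigma']
  refine sum_involution (fun a _ => ⟨a.2, a.1⟩) (fun ⟨y, z⟩ h => ?_) (fun ⟨y, z⟩ h _ => ?_)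
    (fun ⟨y, z⟩ h => ?_) (fun _ _ => rfl)
  all_goals simp only [mem_sigma, mem_erase, ne_eq] at h
  · have hyz : y ≠ z := Ne.symm h.2.1
    simp only [mem_compl] at h
    rw [insert_comm z y, ← mul_assoc, ← mul_assoc, insertSign_antisymm hyz h.1 h.2.2]
    ring
  · exact fun heq => h.2.1 (congrArg Sigma.fst heq)
  · simp only [mem_sigma, mem_erase]
    exact ⟨h.2.2, Ne.symm h.2.1, h.1⟩

lemma supportedChains_mono (h : Δ ⊆ Δ') : supportedChains k Δ p ≤ supportedChains k Δ' p :=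
  fun _ hu => mem_supportedChains.mpr fun F hF =>
    ⟨h (mem_supportedChains.mp hu F hF).1, (mem_supportedChains.mp hu F hF).2⟩

lemma simplexBoundary_mem (hΔ : IsComplex Δ) (hu : u ∈ supportedChains k Δ (p + 1)) :
    simplexBoundary k u ∈ supportedChains k Δ p := by
  rw [mem_supportedChains] at hu ⊢
  intro G hG
  rw [simplexBoundary_apply] at hG
  obtain ⟨y, hy, hne⟩ := exists_ne_zero_of_sum_ne_zero hG
  obtain ⟨hmem, hcard⟩ := hu _ (right_ne_zero_of_mul hne)
  rw [card_insert_of_notMem (mem_compl.mp hy), Nat.cast_succ] at hcard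
  exact ⟨hΔ _ hmem _ (subset_insert _ _), by linarith⟩

lemma homologyVanishes_of_eq_bot (h : supportedChains k Δ p = ⊥) : HomologyVanishes k Δ p := by
  intro u hu _
  rw [h, Submodule.mem_bot] at hu
  exact ⟨0, zero_mem _, by rw [hu, map_zero]⟩

lemma homologyVanishes_empty : HomologyVanishes k (∅ : Set (Finset (Fin n))) p :=
  homologyVanishes_of_eq_bot <| (Submodule.eq_bot_iff _).mpr fun _ hu =>
    funext fun F => by_contra fun h => (mem_supportedChains.mp hu F h).1

lemma homologyVanishes_of_le_neg_two (hp : p ≤ -2) : HomologyVanishes k Δ p :=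
  homologyVanishes_of_eq_bot <| (Submodule.eq_bot_iff _).mpr fun _ hu =>
    funext fun F => by_contra fun h => by have := (mem_supportedChains.mp hu F h).2; omega

variable (k) in
open Classical in
noncomputable def extendChain (Δ : Set (Finset (Fin n))) (p : ℤ) (f : Chains k Δ p) :
    Finset (Fin n) → k :=
  fun F => if h : F ∈ Δ ∧ (#F : ℤ) = p + 1 then f ⟨F, h⟩ else 0

lemma extendChain_mem (f : Chains k Δ p) : extendChain k Δ p f ∈ supportedChains k Δ p :=
  mem_supportedChains.mpr fun F hF => by_contra fun h => hF (by rw [extendChain, dif_neg h])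

lemma extendChain_injective : Function.Injective (extendChain k Δ p) := fun f g h =>
  funext fun F => by simpa [extendChain, dif_pos F.2] using congrFun h F.1

lemma exists_extendChain_eq (hu : u ∈ supportedChains k Δ p) :
    ∃ f, extendChain k Δ p f = u := by
  refine ⟨fun F => u F.1, funext fun F => ?_⟩
  rw [extendChain]
  split_ifs with h
  · rfl
  · by_contra hF
    exact h (mem_supportedChains.mp hu F (Ne.symm hF))

lemma extendChain_chainsCongr {q : ℤ} (h : p = q) (f : Chains k Δ p) :
    extendChain k Δ q (chainsCongr k Δ h f) = extendChain k Δ p f := by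
  subst h; rfl

lemma extendChain_boundary (hΔ : IsComplex Δ) (f : Chains k Δ p) :
    extendChain k Δ (p - 1) (boundary k Δ p f) = simplexBoundary k (extendChain k Δ p f) := by
  funext G
  rw [simplexBoundary_apply, extendChain]
  split_ifs with hG
  · show boundaryFun k Δ p f _ = _
    rw [boundaryFun, ← sum_subset (subset_univ Gᶜ) fun y _ hy =>
      dif_neg fun h => hy (mem_compl.mpr h.1)]
    refine sum_congr rfl fun y hy => ?_
    have hcard : (#(insert y G) : ℤ) = p + 1 := by
      rw [card_insert_of_notMem (mem_compl.mp hy), Nat.cast_succ, hG.2, sub_add_cancel]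
    by_cases hmem : insert y G ∈ Δ
    · rw [dif_pos ⟨mem_compl.mp hy, hmem⟩, extendChain, dif_pos ⟨hmem, hcard⟩]
      rfl
    · rw [dif_neg fun h => hmem h.2, extendChain, dif_neg fun h => hmem h.1, mul_zero]
  · refine (sum_eq_zero fun y hy => ?_).symm
    rw [extendChain, dif_neg, mul_zero]
    rintro ⟨hmem, hcard⟩
    rw [card_insert_of_notMem (mem_compl.mp hy), Nat.cast_succ] at hcard
    exact hG ⟨hΔ _ hmem _ (subset_insert _ _), by linarith⟩

lemma extendChain_eq_zero_iff {f : Chains k Δ p} : extendChain k Δ p f = 0 ↔ f = 0 :=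
  extendChain_injective.eq_iff' (funext fun F => by simp [extendChain])

lemma mem_cycles_iff (hΔ : IsComplex Δ) {f : Chains k Δ p} :
    f ∈ cycles k Δ p ↔ simplexBoundary k (extendChain k Δ p f) = 0 := by
  rw [cycles, LinearMap.mem_ker, ← extendChain_boundary hΔ, extendChain_eq_zero_iff]

lemma mem_boundaries_iff_s6 (hΔ : IsComplex Δ) {f : Chains k Δ p} :
    f ∈ boundaries k Δ p ↔
      ∃ v ∈ supportedChains k Δ (p + 1), simplexBoundary k v = extendChain k Δ p f := by
  rw [boundaries, LinearMap.mem_range]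
  constructor
  · rintro ⟨g, rfl⟩
    refine ⟨extendChain k Δ (p + 1) g, extendChain_mem g, ?_⟩
    rw [LinearMap.comp_apply, LinearEquiv.coe_coe, extendChain_chainsCongr,
      extendChain_boundary hΔ]
  · rintro ⟨v, hv, hdv⟩
    obtain ⟨g, rfl⟩ := exists_extendChain_eq hv
    refine ⟨g, extendChain_injective ?_⟩
    rw [LinearMap.comp_apply, LinearEquiv.coe_coe, extendChain_chainsCongr,
      extendChain_boundary hΔ, hdv]

theorem subsingleton_reducedHomology_iff_s6 (hΔ : IsComplex Δ) :
    Subsingleton (ReducedHomology k Δ p) ↔ HomologyVanishes k Δ p := by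
  rw [Submodule.Quotient.subsingleton_iff, Submodule.comap_subtype_eq_top]
  constructor
  · intro h u hu hdu
    obtain ⟨f, rfl⟩ := exists_extendChain_eq hu
    exact (mem_boundaries_iff_s6 hΔ).mp (h ((mem_cycles_iff hΔ).mpr hdu))
  · intro h f hf
    exact (mem_boundaries_iff_s6 hΔ).mpr (h _ (extendChain_mem f) ((mem_cycles_iff hΔ).mp hf))

variable (k) in
noncomputable def toLink (x : Fin n) : (Finset (Fin n) → k) →ₗ[k] (Finset (Fin n) → k) :=
  LinearMap.pi fun F => if x ∈ F then 0 else insertSign k x F • LinearMap.proj (insert x F)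

variable (k) in
noncomputable def ofLink (x : Fin n) (w : Finset (Fin n) → k) : Finset (Fin n) → k :=
  fun F => if x ∈ F then insertSign k x (F.erase x) * w (F.erase x) else 0

lemma toLink_apply (u : Finset (Fin n) → k) (F : Finset (Fin n)) :
    toLink k x u F = if x ∈ F then 0 else insertSign k x F * u (insert x F) := by
  by_cases hx : x ∈ F <;> simp [toLink, hx]

lemma toLink_mem (hu : u ∈ supportedChains k Δ (p + 1)) :
    toLink k x u ∈ supportedChains k (link Δ {x}) p := by
  rw [mem_supportedChains] at hu ⊢
  intro F hF
  rw [toLink_apply] at hF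
  split_ifs at hF with hx
  · exact absurd rfl hF
  obtain ⟨hmem, hcard⟩ := hu _ (right_ne_zero_of_mul hF)
  rw [card_insert_of_notMem hx, Nat.cast_succ] at hcard
  exact ⟨⟨disjoint_singleton_right.mpr hx, by rwa [union_singleton]⟩, by linarith⟩

lemma ofLink_mem (hw : w ∈ supportedChains k (link Δ {x}) p) :
    ofLink k x w ∈ supportedChains k Δ (p + 1) := by
  rw [mem_supportedChains] at hw ⊢
  intro F hF
  simp only [ofLink] at hF
  split_ifs at hF with hx
  · obtain ⟨⟨-, hmem⟩, hcard⟩ := hw _ (right_ne_zero_of_mul hF)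
    rw [union_singleton, insert_erase hx] at hmem
    rw [card_erase_of_mem hx, Nat.cast_sub (card_pos.mpr ⟨x, hx⟩)] at hcard
    exact ⟨hmem, by push_cast at hcard; linarith⟩
  · exact absurd rfl hF

lemma toLink_ofLink (hw : w ∈ supportedChains k (link Δ {x}) p) :
    toLink k x (ofLink k x w) = w := by
  funext F
  rw [toLink_apply]
  split_ifs with hx
  · by_contra h
    exact disjoint_singleton_right.mp (mem_supportedChains.mp hw F (Ne.symm h)).1.1 hx
  · rw [ofLink, if_pos (mem_insert_self x F), erase_insert hx, ← mul_assoc,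
      insertSign_mul_self, one_mul]

lemma toLink_eq_zero_of_mem (hu : u ∈ supportedChains k (restrict Δ {x}ᶜ) p) :
    toLink k x u = 0 := by
  funext F
  rw [toLink_apply, Pi.zero_apply]
  split_ifs
  · rfl
  · by_contra h
    have hsub := (mem_supportedChains.mp hu _ (right_ne_zero_of_mul h)).1.2
    exact subset_compl_singleton.mp hsub (mem_insert_self x F)

lemma mem_restrict_of_toLink_eq_zero (hu : u ∈ supportedChains k Δ p) (h : toLink k x u = 0) :
    u ∈ supportedChains k (restrict Δ {x}ᶜ) p := by
  rw [mem_supportedChains] at hu ⊢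
  intro F hF
  obtain ⟨hmem, hcard⟩ := hu F hF
  refine ⟨⟨hmem, subset_compl_singleton.mpr fun hx => ?_⟩, hcard⟩
  have := congrFun h (F.erase x)
  rw [toLink_apply, if_neg (notMem_erase x F), insert_erase hx, Pi.zero_apply] at this
  apply hF
  calc u F = insertSign k x (F.erase x) * (insertSign k x (F.erase x) * u F) := by
        rw [← mul_assoc, insertSign_mul_self, one_mul]
    _ = 0 := by rw [this, mul_zero]

lemma simplexBoundary_toLink (u : Finset (Fin n) → k) :
    simplexBoundary k (toLink k x u) = -toLink k x (simplexBoundary k u) := by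
  funext F
  simp only [simplexBoundary_apply, toLink_apply, Pi.neg_apply]
  by_cases hx : x ∈ F
  · simp [hx]
  rw [if_neg hx, ← sum_erase (a := x) _ (by simp), compl_insert, mul_sum, ← sum_neg_distrib]
  refine sum_congr rfl fun y hy => ?_
  obtain ⟨hyx, hyF⟩ := mem_erase.mp hy
  have hx' : x ∉ insert y F := by simp [Ne.symm hyx, hx]
  rw [if_neg hx', insert_comm, ← mul_assoc, ← mul_assoc,
    insertSign_antisymm hyx (mem_compl.mp hyF) hx]
  ring

lemma toLink_simplexBoundary_ofLink (hw : w ∈ supportedChains k (link Δ {x}) p) :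
    toLink k x (simplexBoundary k (ofLink k x w)) = -simplexBoundary k w := by
  have h := simplexBoundary_toLink (x := x) (ofLink k x w)
  rw [toLink_ofLink hw] at h
  rw [h, neg_neg]

theorem HomologyVanishes.of_deletion_of_link (hΔ : IsComplex Δ)
    (hdel : HomologyVanishes k (restrict Δ {x}ᶜ) p)
    (hlk : HomologyVanishes k (link Δ {x}) (p - 1)) : HomologyVanishes k Δ p := by
  obtain ⟨q, rfl⟩ : ∃ q, p = q + 1 := ⟨p - 1, by ring⟩
  rw [add_sub_cancel_right] at hlk
  intro u hu hdu
  -- correct `u` by a boundary until its contraction at `x` vanishes: it then lives on `Δ_{-x}`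
  obtain ⟨w, hw, hdw⟩ := hlk
    _ (toLink_mem hu) (by rw [simplexBoundary_toLink, hdu, map_zero, neg_zero])
  have hf := ofLink_mem hw
  have hz : u + simplexBoundary k (ofLink k x w) ∈ supportedChains k (restrict Δ {x}ᶜ) (q + 1) :=
    mem_restrict_of_toLink_eq_zero (add_mem hu (simplexBoundary_mem hΔ hf)) <| by
      rw [map_add, toLink_simplexBoundary_ofLink hw, hdw, add_neg_cancel]
  obtain ⟨g, hg, hdg⟩ := hdel
    _ hz (by rw [map_add, hdu, simplexBoundary_simplexBoundary, add_zero])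
  refine ⟨g - ofLink k x w, sub_mem (supportedChains_mono restrict_subset hg) hf, ?_⟩
  rw [map_sub, hdg, add_sub_cancel_right]

theorem HomologyVanishes.deletion_of_link (hΔ : IsComplex Δ) (hΔp : HomologyVanishes k Δ p)
    (hlk : HomologyVanishes k (link Δ {x}) p) : HomologyVanishes k (restrict Δ {x}ᶜ) p := by
  intro g hg hdg
  obtain ⟨f, hf, hdf⟩ := hΔp _ (supportedChains_mono restrict_subset hg) hdg
  obtain ⟨w, hw, hdw⟩ := hlk _ (toLink_mem hf) (by
    rw [simplexBoundary_toLink, hdf, toLink_eq_zero_of_mem hg, neg_zero])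
  refine ⟨f + simplexBoundary k (ofLink k x w), ?_, ?_⟩
  · refine mem_restrict_of_toLink_eq_zero (add_mem hf (simplexBoundary_mem hΔ (ofLink_mem hw))) ?_
    rw [map_add, toLink_simplexBoundary_ofLink hw, hdw, add_neg_cancel]
  · rw [map_add, hdf, simplexBoundary_simplexBoundary, add_zero]

theorem HomologyVanishes.link_of_deletion (hΔ : IsComplex Δ) (hΔp : HomologyVanishes k Δ (p + 1))
    (hdel : HomologyVanishes k (restrict Δ {x}ᶜ) p) : HomologyVanishes k (link Δ {x}) p := by
  intro w hw hdw
  have hf := ofLink_mem hw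
  have hdf : simplexBoundary k (ofLink k x w) ∈ supportedChains k (restrict Δ {x}ᶜ) p :=
    mem_restrict_of_toLink_eq_zero (simplexBoundary_mem hΔ hf) <| by
      rw [toLink_simplexBoundary_ofLink hw, hdw, neg_zero]
  obtain ⟨g, hg, hdg⟩ := hdel _ hdf (simplexBoundary_simplexBoundary _)
  obtain ⟨v, hv, hdv⟩ := hΔp _ (sub_mem hf (supportedChains_mono restrict_subset hg)) (by
    rw [map_sub, hdg, sub_self])
  refine ⟨-toLink k x v, neg_mem (toLink_mem hv), ?_⟩
  rw [map_neg, simplexBoundary_toLink, neg_neg, hdv, map_sub, toLink_ofLink hw,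
    toLink_eq_zero_of_mem hg, sub_zero]

variable {W : Finset (Fin n)}

variable (k) in
def RestrictionsVanish (Δ : Set (Finset (Fin n))) (W : Finset (Fin n)) (d : ℤ) : Prop :=
  ∀ p : ℤ, ∀ R ⊆ W, p + #R = d - 2 → HomologyVanishes k (restrict Δ Rᶜ) p

lemma RestrictionsVanish.link_singleton (hΔ : IsComplex Δ) {d : ℤ}
    (h : RestrictionsVanish k Δ W (d + 1)) (hx : x ∈ W) :
    RestrictionsVanish k (link Δ {x}) (W.erase x) d := by
  intro p R hR hpR
  obtain ⟨hRW, hxR⟩ := subset_erase.mp hR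
  rw [← link_restrict (singleton_subset_iff.mpr (mem_compl.mpr hxR))]
  refine (h (p + 1) R hRW (by omega)).link_of_deletion (isComplex_restrict hΔ _) ?_
  rw [restrict_restrict_compl]
  exact h p _ (insert_subset hx hRW) (by rw [card_insert_of_notMem hxR]; push_cast; omega)

lemma RestrictionsVanish.homologyVanishes_of_le (hΔ : IsComplex Δ) {d : ℤ} (hdW : d ≤ #W)
    (h : RestrictionsVanish k Δ W d)
    (hlk : ∀ x ∈ W, ∀ p : ℤ, ∀ R ⊆ W.erase x, p + #R ≤ d - 3 →
      HomologyVanishes k (restrict (link Δ {x}) Rᶜ) p) :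
    ∀ p : ℤ, ∀ R ⊆ W, p + #R ≤ d - 2 → HomologyVanishes k (restrict Δ Rᶜ) p := by
  intro p R hR hpR
  obtain ⟨s, hs⟩ : ∃ s : ℕ, p + #R + s = d - 2 := ⟨(d - 2 - p - #R).toNat, by omega⟩
  clear hpR
  induction s generalizing R with
  | zero => exact h p R hR (by omega)
  | succ s ih =>
    rcases le_or_gt p (-2) with hp | hp
    · exact homologyVanishes_of_le_neg_two hp
    obtain ⟨x, hxW, hxR⟩ := exists_mem_notMem_of_card_lt_card (s := R) (t := W) (by omega)
    refine HomologyVanishes.of_deletion_of_link (x := x) (isComplex_restrict hΔ _) ?_ ?_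
    · rw [restrict_restrict_compl]
      exact ih _ (insert_subset hxW hR) (by rw [card_insert_of_notMem hxR]; push_cast; omega)
    · rw [link_restrict (singleton_subset_iff.mpr (mem_compl.mpr hxR))]
      exact hlk x hxW (p - 1) R (subset_erase.mpr ⟨hR, hxR⟩) (by omega)

theorem homologyVanishes_link_of_restrictionsVanish (d : ℕ) (hΔ : IsComplex Δ)
    (hΔW : ∀ F ∈ Δ, F ⊆ W) (hdW : d ≤ #W)
    (h : RestrictionsVanish k Δ W d) :
    (∀ p : ℤ, ∀ R ⊆ W, p + #R ≤ (d : ℤ) - 2 → HomologyVanishes k (restrict Δ Rᶜ) p) ∧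
      ∀ S ∈ Δ, ∀ p : ℤ, p + #S ≤ (d : ℤ) - 2 → HomologyVanishes k (link Δ S) p := by
  induction d generalizing Δ W with
  | zero =>
    exact ⟨fun p R _ _ => homologyVanishes_of_le_neg_two (by omega),
      fun S _ p _ => homologyVanishes_of_le_neg_two (by omega)⟩
  | succ d ih =>
    rw [Nat.cast_succ] at h ⊢
    have hlk (x) (hx : x ∈ W) := ih (isComplex_link hΔ _)
      (fun F hF => subset_erase.mpr
        ⟨subset_union_left.trans (hΔW _ hF.2), disjoint_singleton_right.mp hF.1⟩)
      (by rw [card_erase_of_mem hx]; omega) (h.link_singleton hΔ hx)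
    have hres := h.homologyVanishes_of_le hΔ (by omega) fun x hx p R hR _ =>
      (hlk x hx).1 p R hR (by omega)
    refine ⟨hres, fun S hS p hp => ?_⟩
    obtain rfl | ⟨x, hx⟩ := S.eq_empty_or_nonempty
    · rw [link_empty, ← restrict_compl_empty (Δ := Δ)]
      exact hres p ∅ (empty_subset _) (by simpa using hp)
    · rw [link_eq_link_link_erase hx]
      exact (hlk x (hΔW S hS hx)).2 _ (erase_mem_link hS hx) p
        (by rw [card_erase_of_mem hx]; have := card_pos.mpr ⟨x, hx⟩; omega)

theorem homologyVanishes_restrict_link (hΔ : IsComplex Δ) {d : ℤ}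
    (h : ∀ S ∈ Δ, ∀ p : ℤ, p + #S ≤ d - 2 → HomologyVanishes k (link Δ S) p)
    (R : Finset (Fin n)) :
    ∀ S ∈ Δ, ∀ p : ℤ, p + #S + #R ≤ d - 2 → HomologyVanishes k (restrict (link Δ S) Rᶜ) p := by
  induction R using Finset.induction_on with
  | empty =>
    intro S hS p hp
    rw [restrict_compl_empty]
    exact h S hS p (by simpa using hp)
  | insert x R hxR ih =>
    intro S hS p hp
    rw [card_insert_of_notMem hxR, Nat.cast_succ] at hp
    by_cases hxS : x ∈ S
    · rw [restrict_link_insert hxS]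
      exact ih S hS p (by omega)
    rw [← restrict_restrict_compl]
    refine (ih S hS p (by omega)).deletion_of_link
      (isComplex_restrict (isComplex_link hΔ S) _) ?_
    rw [link_restrict (singleton_subset_iff.mpr (mem_compl.mpr hxR)),
      link_link (disjoint_singleton_right.mpr hxS), union_singleton]
    by_cases hxS' : insert x S ∈ Δ
    · exact ih _ hxS' p (by rw [card_insert_of_notMem hxS, Nat.cast_succ]; omega)
    · rw [link_eq_empty hΔ hxS', empty_restrict]
      exact homologyVanishes_empty

end

/-- `Δ` is Cohen-Macaulay iff `H̃_p(Δ_{-R}) = 0` for `p + |R| = d - 2`. -/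
theorem stmt6 (k : Type) [Field k] {n : ℕ} (Δ : Set (Finset (Fin n)))
    (hΔ : IsComplex Δ) (d : ℕ) (hd : IsDim Δ d) :
    (∀ S ∈ Δ, ∀ p : ℤ, p + S.card ≤ (d : ℤ) - 2 →
        Subsingleton (ReducedHomology k (link Δ S) p)) ↔
    (∀ (p : ℤ) (R : Finset (Fin n)), p + R.card = (d : ℤ) - 2 →
        Subsingleton (ReducedHomology k (restrict Δ Rᶜ) p)) := by
  obtain ⟨F, hF, hFd⟩ := hd.2
  simp only [subsingleton_reducedHomology_iff_s6 (isComplex_link hΔ _),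
    subsingleton_reducedHomology_iff_s6 (isComplex_restrict hΔ _)]
  constructor
  · intro hCM p R hpR
    have := homologyVanishes_restrict_link hΔ hCM R ∅ (hΔ F hF ∅ (empty_subset F)) p
      (by simpa using hpR.le)
    rwa [link_empty] at this
  · intro hres
    refine (homologyVanishes_link_of_restrictionsVanish (W := univ) d hΔ (fun F _ => subset_univ F)
      ?_ fun p R _ => hres p R).2
    simpa [← hFd] using card_le_univ F

end SCx
end

section
/- Let [n] = R ∪ S ∪ T be a partition with T nonempty and suppose H̃_p(Δ_R^{S,T}) ≠ 0. Then for any T' ⊆ T there exist R' ⊇ R and S' ⊇ S (with R'∪S'∪T' partitioning [n]) such that H̃_p(Δ_{R'}^{S',T'}) ≠ 0. -/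
open Finset

namespace SCx

variable (k : Type) [Field k] {n : ℕ}

/-!
Fix `x ∈ T \ T'`. With `Γ = Δ_{R ∪ x}^{S}`, the complex `Δ_R^{S}` is the deletion of `x` from
`Γ` (`restrict Γ {x}ᶜ`) and `Δ_R^{S ∪ x}` is the link of `x` in `Γ` (`link Γ {x}`). The relative
chain complex of the pair (`Γ`, deletion) is the link shifted by one, so the long exact sequence
shows that `H̃_p` of the deletion vanishes as soon as `H̃_p` of `Γ` and of the link vanish. Hence
`H̃_p(Δ_R^{S,T}) ≠ 0` survives moving `x` from `T` into `R` or into `S`; repeat until `T = T'`.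
-/

open Classical

variable {k}

section Chains

lemma chainsCongr_apply (Δ : Set (Finset (Fin n))) {p q : ℤ} (h : p = q)
    (f : Chains k Δ p) (G : {F : Finset (Fin n) // F ∈ Δ ∧ (F.card : ℤ) = q + 1}) :
    chainsCongr k Δ h f G = f ⟨G.1, G.2.1, h ▸ G.2.2⟩ := by
  subst h; rfl

lemma cast_card_insert {F : Finset (Fin n)} {x : Fin n} (hx : x ∉ F) {q : ℤ}
    (h : (F.card : ℤ) = q) : ((insert x F).card : ℤ) = q + 1 := by
  rw [card_insert_of_notMem hx]; push_cast; rw [h]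

lemma boundary_apply (Δ : Set (Finset (Fin n))) (p : ℤ) (f : Chains k Δ p)
    (G : {F : Finset (Fin n) // F ∈ Δ ∧ (F.card : ℤ) = p - 1 + 1}) :
    boundary k Δ p f G = ∑ x : Fin n,
      if h : x ∉ G.1 ∧ insert x G.1 ∈ Δ then
        (-1 : k) ^ #(G.1.filter (· < x)) *
          f ⟨insert x G.1, h.2, (cast_card_insert h.1 G.2.2).trans (by ring)⟩
      else 0 := rfl

lemma subsingleton_reducedHomology_iff_s7 (Γ : Set (Finset (Fin n))) (p : ℤ) :
    Subsingleton (ReducedHomology k Γ p) ↔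
      ∀ z : Chains k Γ p, boundary k Γ p z = 0 →
        ∃ w, chainsCongr k Γ (show p + 1 - 1 = p by ring) (boundary k Γ (p + 1) w) = z := by
  rw [Submodule.Quotient.subsingleton_iff, Submodule.eq_top_iff', Subtype.forall]
  rfl

variable (k) in
noncomputable def transfer (Γ' Γ : Set (Finset (Fin n))) (p : ℤ) :
    Chains k Γ' p →ₗ[k] Chains k Γ p where
  toFun f G := if h : G.1 ∈ Γ' then f ⟨G.1, h, G.2.2⟩ else 0
  map_add' f g := by funext G; by_cases h : G.1 ∈ Γ' <;> simp [h]
  map_smul' c f := by funext G; by_cases h : G.1 ∈ Γ' <;> simp [h]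

lemma transfer_apply (Γ' Γ : Set (Finset (Fin n))) (p : ℤ) (f : Chains k Γ' p)
    (G : {F : Finset (Fin n) // F ∈ Γ ∧ (F.card : ℤ) = p + 1}) :
    transfer k Γ' Γ p f G = if h : G.1 ∈ Γ' then f ⟨G.1, h, G.2.2⟩ else 0 := rfl

lemma boundary_transfer {Γ' Γ : Set (Finset (Fin n))} (hΓ' : IsComplex Γ') (hsub : Γ' ⊆ Γ)
    (p : ℤ) (f : Chains k Γ' p) :
    boundary k Γ p (transfer k Γ' Γ p f) = transfer k Γ' Γ (p - 1) (boundary k Γ' p f) := by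
  funext G
  simp only [boundary_apply, transfer_apply]
  by_cases hG : G.1 ∈ Γ'
  · rw [dif_pos hG]
    refine sum_congr rfl fun y _ => ?_
    by_cases hy : y ∈ G.1
    · simp [hy]
    · by_cases hyΓ' : insert y G.1 ∈ Γ'
      · simp [hy, hyΓ', hsub hyΓ']
      · simp [hy, hyΓ']
  · rw [dif_neg hG]
    refine sum_eq_zero fun y _ => ?_
    split_ifs with hy hyΓ'
    · exact absurd (hΓ' _ hyΓ' _ (subset_insert y G.1)) hG
    · rw [mul_zero]
    · rfl

end Chains

section DeletionLink

variable {Γ : Set (Finset (Fin n))} {x : Fin n}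

lemma mem_restrict_compl_singleton {F : Finset (Fin n)} :
    F ∈ restrict Γ {x}ᶜ ↔ F ∈ Γ ∧ x ∉ F := by
  simp [restrict]

lemma mem_link_singleton {F : Finset (Fin n)} :
    F ∈ link Γ {x} ↔ x ∉ F ∧ insert x F ∈ Γ := by
  simp [link]

lemma restrict_subset_s7 (V : Finset (Fin n)) : restrict Γ V ⊆ Γ := fun _ hF => hF.1

lemma IsComplex.restrict (hΓ : IsComplex Γ) (V : Finset (Fin n)) : IsComplex (restrict Γ V) :=
  fun _ hF G hGF => ⟨hΓ _ hF.1 G hGF, hGF.trans hF.2⟩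

lemma IsComplex.link (hΓ : IsComplex Γ) (S : Finset (Fin n)) : IsComplex (link Γ S) :=
  fun _ hF _ hGF => ⟨hF.1.mono_left hGF, hΓ _ hF.2 _ (union_subset_union hGF subset_rfl)⟩

lemma IsComplex.link_singleton_subset_restrict (hΓ : IsComplex Γ) (x : Fin n) :
    SCx.link Γ {x} ⊆ SCx.restrict Γ {x}ᶜ := by
  intro F hF
  rw [mem_link_singleton] at hF
  exact mem_restrict_compl_singleton.2 ⟨hΓ _ hF.2 _ (subset_insert x F), hF.1⟩

variable (k) in
/-- Chain-level identification of the relative chains of `Γ` modulo the deletion of `x` with the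
chains of the link, shifted by one; the sign is the one `x` carries in the boundary formula. -/
noncomputable def linkChain (Γ : Set (Finset (Fin n))) (x : Fin n) (p : ℤ)
    (w : Chains k Γ (p + 1)) : Chains k (link Γ {x}) p := fun F =>
  (-1) ^ #(F.1.filter (· < x)) *
    w ⟨insert x F.1, (mem_link_singleton.1 F.2.1).2,
      cast_card_insert (mem_link_singleton.1 F.2.1).1 F.2.2⟩

lemma neg_one_pow_card_filter_lt_insert {R : Type*} [Ring R] {s : Finset (Fin n)} {a b : Fin n}
    (ha : a ∉ s) :
    (-1 : R) ^ #((insert a s).filter (· < b)) =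
      (if a < b then -1 else 1) * (-1) ^ #(s.filter (· < b)) := by
  rw [filter_insert]
  split_ifs with h
  · rw [card_insert_of_notMem fun h' => ha (mem_filter.1 h').1, pow_succ, mul_neg_one, neg_one_mul]
  · rw [one_mul]

lemma boundary_linkChain (p : ℤ) (w : Chains k Γ (p + 1))
    (G : {F : Finset (Fin n) // F ∈ link Γ {x} ∧ (F.card : ℤ) = p - 1 + 1}) :
    boundary k (link Γ {x}) p (linkChain k Γ x p w) G =
      -(-1) ^ #(G.1.filter (· < x)) * boundary k Γ (p + 1) w
        ⟨insert x G.1, (mem_link_singleton.1 G.2.1).2,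
          (cast_card_insert (mem_link_singleton.1 G.2.1).1 G.2.2).trans (by ring)⟩ := by
  have hxG : x ∉ G.1 := (mem_link_singleton.1 G.2.1).1
  rw [boundary_apply, boundary_apply, mul_sum]
  refine sum_congr rfl fun y _ => ?_
  rcases eq_or_ne y x with rfl | hyx
  · rw [dif_neg fun h => (mem_link_singleton.1 h.2).1 (mem_insert_self _ _),
      dif_neg fun h => h.1 (mem_insert_self _ _), mul_zero]
  have hiff : y ∉ G.1 ∧ insert y G.1 ∈ link Γ {x} ↔
      y ∉ insert x G.1 ∧ insert y (insert x G.1) ∈ Γ := by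
    simp [mem_link_singleton, hyx, hyx.symm, hxG, insert_comm]
  by_cases hy : y ∉ G.1 ∧ insert y G.1 ∈ link Γ {x}
  · rw [dif_pos hy, dif_pos (hiff.1 hy), linkChain]
    simp only [insert_comm x y]
    rw [neg_one_pow_card_filter_lt_insert hy.1, neg_one_pow_card_filter_lt_insert hxG]
    rcases hyx.lt_or_gt with h | h <;> simp only [h, h.not_gt, if_true, if_false] <;> ring
  · rw [dif_neg hy, dif_neg (mt hiff.2 hy), mul_zero]

lemma boundary_eq_boundary_restrict_add_linkChain (p : ℤ) (w : Chains k Γ (p + 1))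
    (G : {F : Finset (Fin n) // F ∈ restrict Γ {x}ᶜ ∧ (F.card : ℤ) = p + 1 - 1 + 1}) :
    boundary k Γ (p + 1) w ⟨G.1, (mem_restrict_compl_singleton.1 G.2.1).1, G.2.2⟩ =
      transfer k (link Γ {x}) (restrict Γ {x}ᶜ) p (linkChain k Γ x p w)
          ⟨G.1, G.2.1, G.2.2.trans (by ring)⟩ +
        boundary k (restrict Γ {x}ᶜ) (p + 1) (transfer k Γ _ (p + 1) w) G := by
  have hxG : x ∉ G.1 := (mem_restrict_compl_singleton.1 G.2.1).2
  have hx_del : ¬(x ∉ G.1 ∧ insert x G.1 ∈ restrict Γ {x}ᶜ) :=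
    fun h => (mem_restrict_compl_singleton.1 h.2).2 (mem_insert_self x G.1)
  rw [boundary_apply, boundary_apply, ← add_sum_erase (M := k) _ _ (mem_univ x),
    ← add_sum_erase (M := k) _ _ (mem_univ x), dif_neg hx_del, zero_add]
  congr 1
  · rw [transfer_apply]
    by_cases hlk : G.1 ∈ link Γ {x}
    · rw [dif_pos (mem_link_singleton.1 hlk), dif_pos hlk]
      rfl
    · rw [dif_neg (mt mem_link_singleton.2 hlk), dif_neg hlk]
  · refine sum_congr rfl fun y hy => ?_
    have hyx : y ≠ x := ne_of_mem_erase hy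
    by_cases hyG : y ∈ G.1
    · simp [hyG]
    · by_cases hyΓ : insert y G.1 ∈ Γ
      · simp [hyG, hyΓ, transfer_apply, mem_restrict_compl_singleton, hyx.symm, hxG]
      · simp [hyG, hyΓ, mem_restrict_compl_singleton]

theorem subsingleton_reducedHomology_restrict_compl_singleton (hΓ : IsComplex Γ) (x : Fin n)
    (p : ℤ) (h : Subsingleton (ReducedHomology k Γ p))
    (hlk : Subsingleton (ReducedHomology k (link Γ {x}) p)) :
    Subsingleton (ReducedHomology k (restrict Γ {x}ᶜ) p) := by
  rw [subsingleton_reducedHomology_iff_s7] at h hlk ⊢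
  -- Diagram chase: `z = ∂w` in `Γ`, then `linkChain w = ∂v` in the link, and `z = ∂(w + v)`.
  intro z hz
  obtain ⟨w, hw⟩ := h (transfer k _ Γ p z) (by
    rw [boundary_transfer (hΓ.restrict _) (restrict_subset_s7 _), hz, map_zero])
  have hw_x : ∀ F : {F : Finset (Fin n) // F ∈ Γ ∧ (F.card : ℤ) = p + 1 - 1 + 1}, x ∈ F.1 →
      boundary k Γ (p + 1) w F = 0 := by
    intro F hxF
    have := congrFun hw ⟨F.1, F.2.1, F.2.2.trans (by ring)⟩
    rwa [chainsCongr_apply, transfer_apply,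
      dif_neg fun h => (mem_restrict_compl_singleton.1 h).2 hxF] at this
  obtain ⟨v, hv⟩ := hlk (linkChain k Γ x p w) (by
    funext G
    rw [boundary_linkChain, hw_x _ (mem_insert_self x G.1), mul_zero]
    rfl)
  refine ⟨transfer k Γ _ (p + 1) w + transfer k (link Γ {x}) _ (p + 1) v, funext fun G => ?_⟩
  have hzG := congrFun hw ⟨G.1, (mem_restrict_compl_singleton.1 G.2.1).1, G.2.2⟩
  rw [chainsCongr_apply, transfer_apply, dif_pos G.2.1] at hzG
  rw [chainsCongr_apply, map_add, Pi.add_apply,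
    boundary_transfer (hΓ.link _) (hΓ.link_singleton_subset_restrict x), ← hzG,
    boundary_eq_boundary_restrict_add_linkChain p w ⟨G.1, G.2.1, G.2.2.trans (by ring)⟩,
    add_comm, ← hv]
  simp only [transfer_apply, chainsCongr_apply]

end DeletionLink

section Partitions

variable {Δ : Set (Finset (Fin n))} {R S : Finset (Fin n)} {x : Fin n}

lemma IsComplex.sub (hΔ : IsComplex Δ) (R S : Finset (Fin n)) : IsComplex (SCx.sub Δ R S) :=
  fun _ hF _ hGF => ⟨hGF.trans hF.1, hΔ _ hF.2 _ (union_subset_union hGF subset_rfl)⟩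

lemma restrict_sub_insert_eq (hxR : x ∉ R) :
    restrict (sub Δ (insert x R) S) {x}ᶜ = sub Δ R S := by
  ext F
  rw [mem_restrict_compl_singleton]
  constructor
  · rintro ⟨⟨hFR, hFS⟩, hxF⟩
    exact ⟨(subset_insert_iff_of_notMem hxF).1 hFR, hFS⟩
  · rintro ⟨hFR, hFS⟩
    exact ⟨⟨hFR.trans (subset_insert x R), hFS⟩, fun hxF => hxR (hFR hxF)⟩

lemma link_sub_insert_eq (hxR : x ∉ R) :
    link (sub Δ (insert x R) S) {x} = sub Δ R (insert x S) := by
  ext F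
  rw [mem_link_singleton]
  constructor
  · rintro ⟨hxF, hFR, hFS⟩
    exact ⟨(insert_subset_insert_iff hxF).1 hFR, by rwa [insert_union, ← union_insert] at hFS⟩
  · rintro ⟨hFR, hFS⟩
    exact ⟨fun hxF => hxR (hFR hxF), insert_subset_insert x hFR,
      by rwa [insert_union, ← union_insert]⟩

theorem not_subsingleton_reducedHomology_sub_insert (hΔ : IsComplex Δ) (hxR : x ∉ R) (p : ℤ)
    (h : ¬Subsingleton (ReducedHomology k (sub Δ R S) p)) :
    ¬Subsingleton (ReducedHomology k (sub Δ (insert x R) S) p) ∨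
      ¬Subsingleton (ReducedHomology k (sub Δ R (insert x S)) p) := by
  rw [← not_and_or, ← link_sub_insert_eq hxR]
  rintro ⟨h₁, h₂⟩
  rw [← restrict_sub_insert_eq hxR] at h
  exact h (subsingleton_reducedHomology_restrict_compl_singleton (hΔ.sub _ _) x p h₁ h₂)

def IsVertexPartition (R S T : Finset (Fin n)) : Prop :=
  Disjoint R S ∧ Disjoint R T ∧ Disjoint S T ∧ R ∪ S ∪ T = univ

lemma IsVertexPartition.insert_left {T : Finset (Fin n)} (h : IsVertexPartition R S T)
    (hx : x ∈ T) : IsVertexPartition (insert x R) S (T.erase x) := by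
  obtain ⟨hRS, hRT, hST, hcov⟩ := h
  refine ⟨disjoint_insert_left.2 ⟨fun hxS => disjoint_left.1 hST hxS hx, hRS⟩,
    disjoint_insert_left.2 ⟨notMem_erase x T, hRT.mono_right (erase_subset x T)⟩,
    hST.mono_right (erase_subset x T), ?_⟩
  rw [← hcov]
  ext y
  by_cases hy : y = x <;> simp [hy, hx]

lemma IsVertexPartition.insert_middle {T : Finset (Fin n)} (h : IsVertexPartition R S T)
    (hx : x ∈ T) : IsVertexPartition R (insert x S) (T.erase x) := by
  obtain ⟨hRS, hRT, hST, hcov⟩ := h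
  refine ⟨disjoint_insert_right.2 ⟨fun hxR => disjoint_left.1 hRT hxR hx, hRS⟩,
    hRT.mono_right (erase_subset x T),
    disjoint_insert_left.2 ⟨notMem_erase x T, hST.mono_right (erase_subset x T)⟩, ?_⟩
  rw [← hcov]
  ext y
  by_cases hy : y = x <;> simp [hy, hx]

theorem exists_isVertexPartition_not_subsingleton (hΔ : IsComplex Δ) (p : ℤ)
    {T T' : Finset (Fin n)} (hT' : T' ⊆ T) (hpart : IsVertexPartition R S T)
    (h : ¬Subsingleton (ReducedHomology k (sub Δ R S) p)) :
    ∃ R' S', R ⊆ R' ∧ S ⊆ S' ∧ IsVertexPartition R' S' T' ∧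
      ¬Subsingleton (ReducedHomology k (sub Δ R' S') p) := by
  induction T using Finset.strongInduction generalizing R S with
  | H T ih =>
  obtain rfl | hlt := eq_or_lt_of_le hT'
  · exact ⟨R, S, subset_rfl, subset_rfl, hpart, h⟩
  obtain ⟨x, hxT, hxT'⟩ := exists_of_ssubset hlt
  have hT'x : T' ⊆ T.erase x := fun y hy => mem_erase.2 ⟨fun h => hxT' (h ▸ hy), hT' hy⟩
  rcases not_subsingleton_reducedHomology_sub_insert hΔ
    (fun hxR => disjoint_left.1 hpart.2.1 hxR hxT) p h with h₁ | h₂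
  · obtain ⟨R', S', hR, hS, hpart', hH⟩ :=
      ih _ (erase_ssubset hxT) hT'x (hpart.insert_left hxT) h₁
    exact ⟨R', S', (subset_insert x R).trans hR, hS, hpart', hH⟩
  · obtain ⟨R', S', hR, hS, hpart', hH⟩ :=
      ih _ (erase_ssubset hxT) hT'x (hpart.insert_middle hxT) h₂
    exact ⟨R', S', hR, (subset_insert x S).trans hS, hpart', hH⟩

end Partitions

theorem stmt7_general (k : Type) [Field k] {n : ℕ} (Δ : Set (Finset (Fin n)))
    (hΔ : IsComplex Δ) (R S T : Finset (Fin n))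
    (hRS : Disjoint R S) (hRT : Disjoint R T) (hST : Disjoint S T)
    (hcov : R ∪ S ∪ T = Finset.univ) (p : ℤ)
    (h : ¬ Subsingleton (ReducedHomology k (sub Δ R S) p))
    (T' : Finset (Fin n)) (hT' : T' ⊆ T) :
    ∃ R' S' : Finset (Fin n), R ⊆ R' ∧ S ⊆ S' ∧
      Disjoint R' S' ∧ Disjoint R' T' ∧ Disjoint S' T' ∧
      R' ∪ S' ∪ T' = Finset.univ ∧
      ¬ Subsingleton (ReducedHomology k (sub Δ R' S') p) := by
  obtain ⟨R', S', hR, hS, ⟨hR'S', hR'T', hS'T', hcov'⟩, hH⟩ :=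
    exists_isVertexPartition_not_subsingleton hΔ p hT' ⟨hRS, hRT, hST, hcov⟩ h
  exact ⟨R', S', hR, hS, hR'S', hR'T', hS'T', hcov', hH⟩

/-- reducing `T`: nonvanishing of `H̃_p(Δ_R^{S,T})` propagates to a
partition with prescribed smaller `T'`, in the same homological degree. -/
theorem stmt7 (k : Type) [Field k] {n : ℕ} (Δ : Set (Finset (Fin n)))
    (hΔ : IsComplex Δ) (R S T : Finset (Fin n))
    (hRS : Disjoint R S) (hRT : Disjoint R T) (hST : Disjoint S T)
    (hcov : R ∪ S ∪ T = Finset.univ) (hT : T.Nonempty) (p : ℤ)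
    (h : ¬ Subsingleton (ReducedHomology k (sub Δ R S) p))
    (T' : Finset (Fin n)) (hT' : T' ⊆ T) :
    ∃ R' S' : Finset (Fin n), R ⊆ R' ∧ S ⊆ S' ∧
      Disjoint R' S' ∧ Disjoint R' T' ∧ Disjoint S' T' ∧
      R' ∪ S' ∪ T' = Finset.univ ∧
      ¬ Subsingleton (ReducedHomology k (sub Δ R' S') p) :=
  stmt7_general k Δ hΔ R S T hRS hRT hST hcov p h T' hT'

end SCx
end
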